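/- arXiv:1210.6624 — 13 statements merged into one kernel-verified Lean document; each statement's English description precedes it below -/
import Mathlib

section
/- If a preorder ⊑ on the states of a Büchi automaton A is good for quotienting (i.e., quotienting by its induced equivalence preserves the language), then any preorder ⊑' contained in ⊑ is also good for quotienting. In particular, the set of GFQ preorders is downward closed under inclusion. -/
/-! A map of states that preserves initial and accepting states and transitions carries
accepting runs to accepting runs. The projection `Q → Q/≡'` is such a map, and so is the map
`Q/≡' → Q/≡` induced by `⊑' ⊆ ⊑`; hence `L(A) ⊆ L(A/⊑') ⊆ L(A/⊑) = L(A)`. -/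

/-- A (nondeterministic) Büchi automaton over alphabet `σ` with state space `Q`. -/
structure BA (σ Q : Type) where
  I : Set Q
  F : Set Q
  δ : Q → σ → Q → Prop

namespace BA
variable {σ Q : Type}

/-- `ρ` is an infinite trace of `A` on the infinite word `w`. -/
def InfTrace (A : BA σ Q) (w : ℕ → σ) (ρ : ℕ → Q) : Prop :=
  ∀ i, A.δ (ρ i) (w i) (ρ (i + 1))

/-- A run is fair iff it visits accepting states infinitely often. -/
def Fair (A : BA σ Q) (ρ : ℕ → Q) : Prop :=
  ∀ n, ∃ m, n ≤ m ∧ ρ m ∈ A.F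

/-- The ω-language of a Büchi automaton. -/
def Lang (A : BA σ Q) : Set (ℕ → σ) :=
  {w | ∃ ρ, A.InfTrace w ρ ∧ ρ 0 ∈ A.I ∧ A.Fair ρ}

end BA

/-- The equivalence induced by a preorder: `x ≡ y` iff `r x y ∧ r y x`. -/
def eqvOf {Q : Type} (r : Q → Q → Prop) (x y : Q) : Prop := r x y ∧ r y x

/-- The quotient automaton `A/⊑` : states are equivalence classes of the
equivalence induced by the preorder `r`, initial/accepting classes are those
containing initial/accepting states, and transitions are induced element-wise. -/
def BA.quot {σ Q : Type} (A : BA σ Q) (r : Q → Q → Prop) : BA σ (Quot (eqvOf r)) where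
  I := {c | ∃ q ∈ A.I, c = Quot.mk _ q}
  F := {c | ∃ q ∈ A.F, c = Quot.mk _ q}
  δ := fun c a c' => ∃ q q', A.δ q a q' ∧ c = Quot.mk _ q ∧ c' = Quot.mk _ q'

namespace BA

variable {σ Q : Type}

theorem lang_subset_of_map {Q' : Type} {A : BA σ Q} {B : BA σ Q'} (f : Q → Q')
    (hI : Set.MapsTo f A.I B.I) (hF : Set.MapsTo f A.F B.F)
    (hδ : ∀ q a q', A.δ q a q' → B.δ (f q) a (f q')) : A.Lang ⊆ B.Lang := by
  rintro w ⟨ρ, htrace, hinit, hfair⟩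
  exact ⟨f ∘ ρ, fun i => hδ _ _ _ (htrace i), hI hinit,
    fun n => (hfair n).imp fun _ ⟨hle, hacc⟩ => ⟨hle, hF hacc⟩⟩

theorem lang_subset_lang_quot (A : BA σ Q) (r : Q → Q → Prop) : A.Lang ⊆ (A.quot r).Lang :=
  lang_subset_of_map (Quot.mk _) (fun q hq => ⟨q, hq, rfl⟩) (fun q hq => ⟨q, hq, rfl⟩)
    fun q _ q' hδ => ⟨q, q', hδ, rfl, rfl⟩

theorem lang_quot_subset_lang_quot_of_le (A : BA σ Q) {r r' : Q → Q → Prop}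
    (h : ∀ x y, r' x y → r x y) : (A.quot r').Lang ⊆ (A.quot r).Lang :=
  lang_subset_of_map (Quot.mapRight fun x y hxy => ⟨h x y hxy.1, h y x hxy.2⟩)
    (by rintro _ ⟨q, hq, rfl⟩; exact ⟨q, hq, rfl⟩)
    (by rintro _ ⟨q, hq, rfl⟩; exact ⟨q, hq, rfl⟩)
    (by rintro _ _ _ ⟨q, q', hδ, rfl, rfl⟩; exact ⟨q, q', hδ, rfl, rfl⟩)

end BA

theorem gfq_downward_closed_general {σ Q : Type} (A : BA σ Q) (r r' : Q → Q → Prop)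
    (hsub : ∀ x y, r' x y → r x y)
    (hGFQ : (A.quot r).Lang = A.Lang) :
    (A.quot r').Lang = A.Lang := by
  refine Set.Subset.antisymm ?_ (A.lang_subset_lang_quot r')
  calc (A.quot r').Lang ⊆ (A.quot r).Lang := A.lang_quot_subset_lang_quot_of_le hsub
    _ = A.Lang := hGFQ

/-- If a preorder `r` on the states of a Büchi automaton `A` is good for quotienting
(GFQ), then any preorder `r'` contained in `r` is also GFQ: the set of GFQ preorders is
downward closed under inclusion. -/
theorem gfq_downward_closed {σ Q : Type} (A : BA σ Q) (r r' : Q → Q → Prop)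
    (hrefl : Reflexive r) (htrans : Transitive r)
    (hrefl' : Reflexive r') (htrans' : Transitive r')
    (hsub : ∀ x y, r' x y → r x y)
    (hGFQ : (A.quot r).Lang = A.Lang) :
    (A.quot r').Lang = A.Lang :=
  gfq_downward_closed_general A r r' hsub hGFQ
end

section
/- Backward trace inclusion is good for quotienting: for every Büchi automaton A, quotienting by the equivalence induced by backward trace inclusion preserves the language, i.e., L(A/⊑bw) = L(A). -/
namespace BA
variable {σ Q : Type}

/-- `ρ` is a finite trace of length `m` of `A` on (the first `m` letters of) `w`. -/
def FinTrace (A : BA σ Q) (w : ℕ → σ) (m : ℕ) (ρ : ℕ → Q) : Prop :=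
  ∀ i < m, A.δ (ρ i) (w i) (ρ (i + 1))

/-- Backward trace inclusion: `p ⊑bw q` iff every initial finite trace ending in `p`
can be matched by an initial finite trace over the same word ending in `q`, matching
visits to accepting states position-wise. -/
def bwIncl (A : BA σ Q) (p q : Q) : Prop :=
  ∀ (w : ℕ → σ) (m : ℕ) (ρ : ℕ → Q),
    A.FinTrace w m ρ → ρ 0 ∈ A.I → ρ m = p →
    ∃ ρ', A.FinTrace w m ρ' ∧ ρ' 0 ∈ A.I ∧ ρ' m = q ∧
      ∀ i ≤ m, ρ i ∈ A.F → ρ' i ∈ A.F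

end BA

/-! A run `ξ` of `A/⊑bw` lifts, for every `n`, to an initial finite trace of `A` of length `n` that
visits `F` wherever `ξ` does: a trace reaching a representative of `ξ n` is redirected by `⊑bw` into
the source of the next quotient transition, extended along it, and redirected again into an
accepting representative of `ξ (n + 1)` if there is one, without losing earlier visits to `F`.
The state space being finite, these traces converge coordinate-wise along a nonprincipal
ultrafilter on `ℕ` (König's lemma), and the limit is an accepting run of `A`. -/

open Filter

theorem Ultrafilter.exists_forall_eventually_eq {α ι β : Type*} [Finite β] (U : Ultrafilter α)
    (g : α → ι → β) : ∃ ρ : ι → β, ∀ i, ∀ᶠ a in U, g a i = ρ i := by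
  choose ρ hρ using fun i => (U.map fun a => g a i).eq_pure_of_finite
  refine ⟨ρ, fun i => show {ρ i} ∈ U.map fun a => g a i from ?_⟩
  rw [hρ i]
  exact Set.mem_singleton (ρ i)

namespace BA

variable {σ Q : Type} {A : BA σ Q}

theorem bwIncl_refl (p : Q) : A.bwIncl p p :=
  fun _ _ ρ hρ h₀ hm => ⟨ρ, hρ, h₀, hm, fun _ _ hF => hF⟩

theorem bwIncl_trans {p q r : Q} (hpq : A.bwIncl p q) (hqr : A.bwIncl q r) : A.bwIncl p r := by
  intro w m ρ hρ h₀ hm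
  obtain ⟨ρ', hρ', h₀', hm', hF'⟩ := hpq w m ρ hρ h₀ hm
  obtain ⟨ρ'', hρ'', h₀'', hm'', hF''⟩ := hqr w m ρ' hρ' h₀' hm'
  exact ⟨ρ'', hρ'', h₀'', hm'', fun i hi hF => hF'' i hi (hF' i hi hF)⟩

theorem equivalence_eqvOf_bwIncl : Equivalence (eqvOf A.bwIncl) where
  refl p := ⟨bwIncl_refl p, bwIncl_refl p⟩
  symm h := ⟨h.2, h.1⟩
  trans h₁ h₂ := ⟨bwIncl_trans h₁.1 h₂.1, bwIncl_trans h₂.2 h₁.2⟩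

theorem bwIncl_of_quot_mk_eq {p q : Q}
    (h : Quot.mk (eqvOf A.bwIncl) p = Quot.mk (eqvOf A.bwIncl) q) : A.bwIncl p q :=
  (equivalence_eqvOf_bwIncl.eqvGen_iff.mp (Quot.eq.mp h)).1

theorem FinTrace.update_succ {w : ℕ → σ} {n : ℕ} {ρ : ℕ → Q} {q : Q} (hρ : A.FinTrace w n ρ)
    (hq : A.δ (ρ n) (w n) q) : A.FinTrace w (n + 1) (Function.update ρ (n + 1) q) := by
  intro i hi
  rcases Nat.lt_succ_iff_lt_or_eq.mp hi with hi | rfl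
  · rw [Function.update_of_ne (by omega), Function.update_of_ne (by omega)]
    exact hρ i hi
  · rwa [Function.update_of_ne (by omega), Function.update_self]

theorem exists_finTrace_succ {w : ℕ → σ} {n : ℕ} {ρ : ℕ → Q} {s t q : Q}
    (hρ : A.FinTrace w n ρ) (h₀ : ρ 0 ∈ A.I) (hs : A.bwIncl (ρ n) s) (hδ : A.δ s (w n) t)
    (ht : A.bwIncl t q) :
    ∃ ρ', A.FinTrace w (n + 1) ρ' ∧ ρ' 0 ∈ A.I ∧ ρ' (n + 1) = q ∧
      ∀ i ≤ n, ρ i ∈ A.F → ρ' i ∈ A.F := by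
  obtain ⟨ρ₁, hρ₁, h₀₁, hn₁, hF₁⟩ := hs w n ρ hρ h₀ rfl
  set ρ₂ := Function.update ρ₁ (n + 1) t
  have hρ₂ : A.FinTrace w (n + 1) ρ₂ := hρ₁.update_succ (hn₁ ▸ hδ)
  have hρ₂₁ : ∀ i ≤ n, ρ₂ i = ρ₁ i := fun i hi => Function.update_of_ne (by omega) _ _
  obtain ⟨ρ₃, hρ₃, h₀₃, hn₃, hF₃⟩ :=
    ht w (n + 1) ρ₂ hρ₂ (by rwa [hρ₂₁ 0 n.zero_le]) (Function.update_self _ _ _)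
  refine ⟨ρ₃, hρ₃, h₀₃, hn₃, fun i hi hF => hF₃ i (by omega) ?_⟩
  rw [hρ₂₁ i hi]
  exact hF₁ i hi hF

theorem exists_finTrace_of_bwIncl_chain {w : ℕ → σ} {q₀ : Q} {r s t : ℕ → Q} (hq₀ : q₀ ∈ A.I)
    (h₀ : A.bwIncl q₀ (r 0)) (hs : ∀ n, A.bwIncl (r n) (s n)) (hδ : ∀ n, A.δ (s n) (w n) (t n))
    (ht : ∀ n, A.bwIncl (t n) (r (n + 1))) (n : ℕ) :
    ∃ ρ, A.FinTrace w n ρ ∧ ρ 0 ∈ A.I ∧ ρ n = r n ∧ ∀ i ≤ n, r i ∈ A.F → ρ i ∈ A.F := by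
  induction n with
  | zero =>
    obtain ⟨ρ, hρ, hρ₀, hρr, -⟩ := h₀ w 0 (fun _ => q₀) (fun i hi => absurd hi (Nat.not_lt_zero i)) hq₀ rfl
    exact ⟨ρ, hρ, hρ₀, hρr, fun i hi hF => by obtain rfl := Nat.le_zero.mp hi; rwa [hρr]⟩
  | succ n ih =>
    obtain ⟨ρ, hρ, hρ₀, hρr, hF⟩ := ih
    obtain ⟨ρ', hρ', hρ₀', hρr', hF'⟩ := exists_finTrace_succ hρ hρ₀ (hρr ▸ hs n) (hδ n) (ht n)
    refine ⟨ρ', hρ', hρ₀', hρr', fun i hi hri => ?_⟩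
    rcases Nat.lt_succ_iff_lt_or_eq.mp (Nat.lt_succ_of_le hi) with hi | rfl
    · exact hF' i (by omega) (hF i (by omega) hri)
    · rwa [hρr']

theorem exists_infTrace_of_finTraces [Finite Q] {w : ℕ → σ} (g : ℕ → ℕ → Q)
    (hg : ∀ n, A.FinTrace w n (g n)) (hg₀ : ∀ n, g n 0 ∈ A.I) :
    ∃ ρ, A.InfTrace w ρ ∧ ρ 0 ∈ A.I ∧ ∀ i, (∀ᶠ n in atTop, g n i ∈ A.F) → ρ i ∈ A.F := by
  let U := hyperfilter ℕ
  have hU : (U : Filter ℕ) ≤ atTop := Nat.cofinite_eq_atTop ▸ hyperfilter_le_cofinite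
  obtain ⟨ρ, hρ⟩ := U.exists_forall_eventually_eq g
  refine ⟨ρ, fun i => ?_, ?_, fun i hF => ?_⟩
  · obtain ⟨n, hi, hi₁, hn⟩ := ((hρ i).and ((hρ (i + 1)).and (hU (eventually_gt_atTop i)))).exists
    exact hi ▸ hi₁ ▸ hg n i hn
  · obtain ⟨n, hn⟩ := (hρ 0).exists
    exact hn ▸ hg₀ n
  · obtain ⟨n, hn, hF⟩ := ((hρ i).and (hU hF)).exists
    exact hn ▸ hF

theorem Lang_subset_quot_Lang (r : Q → Q → Prop) : A.Lang ⊆ (A.quot r).Lang := by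
  rintro w ⟨ρ, hρ, h₀, hfair⟩
  refine ⟨fun i => Quot.mk _ (ρ i), fun i => ⟨ρ i, ρ (i + 1), hρ i, rfl, rfl⟩, ⟨ρ 0, h₀, rfl⟩,
    fun n => ?_⟩
  obtain ⟨m, hm, hF⟩ := hfair n
  exact ⟨m, hm, ρ m, hF, rfl⟩

theorem quot_bwIncl_Lang_subset [Finite Q] : (A.quot A.bwIncl).Lang ⊆ A.Lang := by
  rintro w ⟨ξ, hξ, ⟨q₀, hq₀, hξ₀⟩, hfair⟩
  choose s t hδ hs ht using hξ
  have hrep : ∀ n, ∃ q, Quot.mk _ q = ξ n ∧ (ξ n ∈ (A.quot A.bwIncl).F → q ∈ A.F) := by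
    intro n
    by_cases hn : ξ n ∈ (A.quot A.bwIncl).F
    · obtain ⟨f, hf, hfn⟩ := hn
      exact ⟨f, hfn.symm, fun _ => hf⟩
    · obtain ⟨q, hq⟩ := Quot.exists_rep (ξ n)
      exact ⟨q, hq, fun h => absurd h hn⟩
  choose r hr hrF using hrep
  choose g hg hg₀ _ hgF using
    exists_finTrace_of_bwIncl_chain hq₀ (bwIncl_of_quot_mk_eq (hξ₀.symm.trans (hr 0).symm))
      (fun n => bwIncl_of_quot_mk_eq ((hr n).trans (hs n))) hδ
      (fun n => bwIncl_of_quot_mk_eq ((ht n).symm.trans (hr (n + 1)).symm))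
  obtain ⟨ρ, hρ, hρ₀, hρF⟩ := exists_infTrace_of_finTraces g hg hg₀
  refine ⟨ρ, hρ, hρ₀, fun n => ?_⟩
  obtain ⟨m, hnm, hm⟩ := hfair n
  exact ⟨m, hnm, hρF m (eventually_atTop.2 ⟨m, fun k hk => hgF k m hk (hrF m hm)⟩)⟩

end BA

theorem bwIncl_GFQ_general {σ Q : Type} [Fintype Q] (A : BA σ Q) :
    (A.quot A.bwIncl).Lang = A.Lang :=
  BA.quot_bwIncl_Lang_subset.antisymm (BA.Lang_subset_quot_Lang _)

/-- Backward trace inclusion is good for quotienting: for every (finite, forward and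
backward complete) Büchi automaton `A`, quotienting by the equivalence induced by
backward trace inclusion preserves the language: `L(A/⊑bw) = L(A)`. -/
theorem bwIncl_GFQ {σ Q : Type} [Fintype Q] (A : BA σ Q)
    (hfwd : ∀ (q : Q) (a : σ), ∃ q', A.δ q a q')
    (hbwd : ∀ (q : Q) (a : σ), ∃ q', A.δ q' a q) :
    (A.quot A.bwIncl).Lang = A.Lang :=
  bwIncl_GFQ_general A
end

section
/- Backward trace inclusion is good for inclusion: given Büchi automata A and B, if every accepting state of A is backward-trace-included in some accepting state of B (with the relation computed on the disjoint union, matching initial states of A to initial states of B), then L(A) ⊆ L(B). -/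
open Filter

/-- Backward trace inclusion between states of two automata `A` and `B` (as computed on
their disjoint union, matching initial states of `A` to initial states of `B`):
every initial finite trace of `A` ending in `p` is matched by an initial finite trace
of `B` over the same word ending in `q`, preserving accepting positions. -/
def bwInclAB {σ Q₁ Q₂ : Type} (A : BA σ Q₁) (B : BA σ Q₂) (p : Q₁) (q : Q₂) : Prop :=
  ∀ (w : ℕ → σ) (m : ℕ) (ρ : ℕ → Q₁),
    A.FinTrace w m ρ → ρ 0 ∈ A.I → ρ m = p →
    ∃ ρ', B.FinTrace w m ρ' ∧ ρ' 0 ∈ B.I ∧ ρ' m = q ∧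
      ∀ i ≤ m, ρ i ∈ A.F → ρ' i ∈ B.F

/-! Each accepting visit of a run of `A` on `w` yields an initial finite run of `B` on a
prefix of `w` that is accepting wherever the run of `A` is. Since `B` has finitely many
states, these ever longer runs have a pointwise limit along an ultrafilter (König's lemma);
it is an initial infinite run of `B` on `w`, accepting at every accepting visit of the
run of `A`, hence fair. -/

theorem Ultrafilter.exists_eventually_eq_of_finite {α β : Type*} [Finite β]
    (U : Ultrafilter α) (f : α → β) : ∃ b, ∀ᶠ a in (U : Filter α), f a = b := by
  obtain ⟨b, hb⟩ := (U.map f).eq_pure_of_finite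
  have hmem : ({b} : Set β) ∈ U.map f := hb ▸ Ultrafilter.mem_pure.2 rfl
  exact ⟨b, Ultrafilter.mem_map.1 hmem⟩

theorem BA.exists_infTrace_of_finTraces_s3 {σ Q : Type} [Finite Q] (B : BA σ Q)
    {w : ℕ → σ} {m : ℕ → ℕ} {g : ℕ → ℕ → Q} (hm : Tendsto m atTop atTop)
    (htrace : ∀ k, B.FinTrace w (m k) (g k)) (hinit : ∀ k, g k 0 ∈ B.I) :
    ∃ ρ, B.InfTrace w ρ ∧ ρ 0 ∈ B.I ∧
      ∀ n, (∀ᶠ k in atTop, g k n ∈ B.F) → ρ n ∈ B.F := by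
  let U := hyperfilter ℕ
  choose ρ hρ using fun n => U.exists_eventually_eq_of_finite (g · n)
  have hlong : ∀ n, ∀ᶠ k in (U : Filter ℕ), n < m k := fun n =>
    Nat.hyperfilter_le_atTop (hm.eventually_gt_atTop n)
  refine ⟨ρ, fun n => ?_, ?_, fun n hF => ?_⟩
  · obtain ⟨k, hk, hk', hlen⟩ := ((hρ n).and ((hρ (n + 1)).and (hlong n))).exists
    exact hk ▸ hk' ▸ htrace k n hlen
  · obtain ⟨k, hk⟩ := (hρ 0).exists
    exact hk ▸ hinit k
  · obtain ⟨k, hk, hkF⟩ := ((hρ n).and (Nat.hyperfilter_le_atTop hF)).exists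
    exact hk ▸ hkF

theorem bwIncl_GFI_general {σ Q₁ Q₂ : Type} [Fintype Q₂]
    (A : BA σ Q₁) (B : BA σ Q₂)
    (h : ∀ p ∈ A.F, ∃ q ∈ B.F, bwInclAB A B p q) :
    A.Lang ⊆ B.Lang := by
  rintro w ⟨ρ, htrace, hinit, hfair⟩
  choose m hm hmF using hfair
  have hmatch : ∀ k, ∃ g : ℕ → Q₂, B.FinTrace w (m k) g ∧ g 0 ∈ B.I ∧
      ∀ i ≤ m k, ρ i ∈ A.F → g i ∈ B.F := fun k => by
    obtain ⟨_, _, hincl⟩ := h _ (hmF k)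
    obtain ⟨g, hg, hgI, -, hgF⟩ := hincl w (m k) ρ (fun i _ => htrace i) hinit rfl
    exact ⟨g, hg, hgI, hgF⟩
  choose g hg hgI hgF using hmatch
  have hm_tendsto : Tendsto m atTop atTop := tendsto_atTop_mono hm tendsto_id
  obtain ⟨ρ', hρ', hρ'I, hρ'F⟩ := B.exists_infTrace_of_finTraces_s3 hm_tendsto hg hgI
  refine ⟨ρ', hρ', hρ'I, fun n => ⟨m n, hm n, hρ'F _ ?_⟩⟩
  filter_upwards [hm_tendsto.eventually_ge_atTop (m n)] with k hk
  exact hgF k (m n) hk (hmF n)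

/-- Backward trace inclusion is good for inclusion: if every accepting state of `A` is
backward-trace-included in some accepting state of `B`, then `L(A) ⊆ L(B)`
(both automata finitely branching, here: finite-state). -/
theorem bwIncl_GFI {σ Q₁ Q₂ : Type} [Fintype Q₁] [Fintype Q₂]
    (A : BA σ Q₁) (B : BA σ Q₂)
    (h : ∀ p ∈ A.F, ∃ q ∈ B.F, bwInclAB A B p q) :
    A.Lang ⊆ B.Lang :=
  bwIncl_GFI_general A B h
end

section
/- Pruning with (id, R) for R a direct-trace-inclusion-refining strict order is good for pruning: let A be a finitely branching Büchi automaton and R an asymmetric transitive relation on states with R ⊆ ⊑di (direct trace inclusion). Removing every transition (p,σ,r) for which there exists a transition (p,σ,r') with r R r' yields an automaton with the same language as A. -/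
namespace BA
variable {σ Q : Type}

/-- Direct trace inclusion: `p ⊑di q` iff every infinite trace from `p` is matched by an
infinite trace from `q` on the same word, preserving accepting positions. -/
def diIncl (A : BA σ Q) (p q : Q) : Prop :=
  ∀ (w : ℕ → σ) (ρ : ℕ → Q),
    A.InfTrace w ρ → ρ 0 = p →
    ∃ ρ', A.InfTrace w ρ' ∧ ρ' 0 = q ∧ ∀ i, ρ i ∈ A.F → ρ' i ∈ A.F

end BA

/-- Pruning with `P(id, R)`: simultaneously remove every transition `(p,σ,r)` such that
there exists a transition `(p,σ,r')` with `R r r'`. -/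
def pruneFw {σ Q : Type} (A : BA σ Q) (R : Q → Q → Prop) : BA σ Q where
  I := A.I
  F := A.F
  δ := fun p a r => A.δ p a r ∧ ¬ ∃ r', A.δ p a r' ∧ R r r'

lemma exists_seq_of_forall_exists {α : Type*} (P : ℕ → α → Prop) (T : ℕ → α → α → Prop)
    {a : α} (h0 : P 0 a) (hstep : ∀ n a, P n a → ∃ b, T n a b ∧ P (n + 1) b) :
    ∃ f : ℕ → α, f 0 = a ∧ ∀ n, P n (f n) ∧ T n (f n) (f (n + 1)) := by
  choose g hgT hgP using hstep
  let f : (n : ℕ) → {x // P n x} := fun n =>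
    Nat.rec ⟨a, h0⟩ (fun n x => ⟨g n x.1 x.2, hgP n x.1 x.2⟩) n
  exact ⟨fun n => (f n).1, rfl, fun n => ⟨(f n).2, hgT n _ _⟩⟩

lemma exists_maximal_of_asymm_of_trans {α : Type*} [Finite α] {R : α → α → Prop}
    (hasym : ∀ x y, R x y → ¬ R y x) (htrans : Transitive R) {D : α → Prop} {x : α}
    (hx : D x) : ∃ r, D r ∧ (x = r ∨ R x r) ∧ ∀ r', D r' → ¬ R r r' := by
  have : IsTrans α (flip R) := ⟨fun _ _ _ hab hbc => htrans hbc hab⟩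
  have : Std.Irrefl (flip R) := ⟨fun a h => hasym a a h h⟩
  obtain ⟨r, ⟨hrD, hxr⟩, hmin⟩ := (Finite.wellFounded_of_trans_of_irrefl (flip R)).has_min
    {r | D r ∧ (x = r ∨ R x r)} ⟨x, hx, Or.inl rfl⟩
  refine ⟨r, hrD, hxr, fun r' hr'D hrr' => hmin r' ⟨hr'D, Or.inr ?_⟩ hrr'⟩
  rcases hxr with rfl | hxr
  exacts [hrr', htrans hxr hrr']

namespace BA
variable {σ Q : Type} (A : BA σ Q)

lemma diIncl_refl (p : Q) : A.diIncl p p :=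
  fun _ ρ hρ hρ0 => ⟨ρ, hρ, hρ0, fun _ h => h⟩

def DominatesFrom (w : ℕ → σ) (ρ₀ : ℕ → Q) (n : ℕ) (q : Q) : Prop :=
  ∃ τ, A.InfTrace (fun j => w (n + j)) τ ∧ τ 0 = q ∧ ∀ j, ρ₀ (n + j) ∈ A.F → τ j ∈ A.F

variable {A} {w : ℕ → σ} {ρ₀ : ℕ → Q}

lemma InfTrace.dominatesFrom_zero (h : A.InfTrace w ρ₀) : A.DominatesFrom w ρ₀ 0 (ρ₀ 0) :=
  ⟨ρ₀, by simpa only [zero_add] using h, rfl, by simp only [zero_add, imp_self, implies_true]⟩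

namespace DominatesFrom

variable {n : ℕ} {q : Q}

lemma mem_F (h : A.DominatesFrom w ρ₀ n q) (hn : ρ₀ n ∈ A.F) : q ∈ A.F := by
  obtain ⟨τ, -, rfl, hτF⟩ := h
  exact hτF 0 hn

lemma of_diIncl {p : Q} (h : A.DominatesFrom w ρ₀ n p) (hpq : A.diIncl p q) :
    A.DominatesFrom w ρ₀ n q := by
  obtain ⟨τ, hτ, hτ0, hτF⟩ := h
  obtain ⟨τ', hτ', hτ'0, hτ'F⟩ := hpq _ τ hτ hτ0
  exact ⟨τ', hτ', hτ'0, fun j hj => hτ'F j (hτF j hj)⟩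

lemma exists_succ (h : A.DominatesFrom w ρ₀ n q) :
    ∃ r, A.δ q (w n) r ∧ A.DominatesFrom w ρ₀ (n + 1) r := by
  obtain ⟨τ, hτ, rfl, hτF⟩ := h
  have hshift : ∀ j, n + 1 + j = n + (j + 1) := fun j => by omega
  refine ⟨τ 1, hτ 0, fun j => τ (j + 1), fun j => ?_, rfl, fun j hj => ?_⟩
  · simpa only [hshift] using hτ (j + 1)
  · exact hτF (j + 1) (by rwa [← hshift])

lemma exists_pruneFw_succ [Finite Q] {R : Q → Q → Prop} (hasym : ∀ x y, R x y → ¬ R y x)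
    (htrans : Transitive R) (hsub : ∀ x y, R x y → A.diIncl x y)
    (h : A.DominatesFrom w ρ₀ n q) :
    ∃ r, (pruneFw A R).δ q (w n) r ∧ A.DominatesFrom w ρ₀ (n + 1) r := by
  obtain ⟨r₀, hqr₀, hr₀⟩ := h.exists_succ
  obtain ⟨r, hqr, hr₀r, hmax⟩ := exists_maximal_of_asymm_of_trans hasym htrans hqr₀
  have hincl : A.diIncl r₀ r := by
    rcases hr₀r with rfl | hR
    exacts [A.diIncl_refl r₀, hsub r₀ r hR]
  exact ⟨r, ⟨hqr, fun ⟨r', hqr', hrr'⟩ => hmax r' hqr' hrr'⟩, hr₀.of_diIncl hincl⟩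

end DominatesFrom

lemma lang_pruneFw_subset (R : Q → Q → Prop) : (pruneFw A R).Lang ⊆ A.Lang :=
  fun _ ⟨ρ, hρ, hI, hF⟩ => ⟨ρ, fun i => (hρ i).1, hI, hF⟩

end BA

theorem prune_id_diIncl_GFP_general {σ Q : Type} [Fintype Q] (A : BA σ Q)
    (R : Q → Q → Prop)
    (hasym : ∀ x y, R x y → ¬ R y x)
    (htrans : Transitive R)
    (hsub : ∀ x y, R x y → A.diIncl x y) :
    (pruneFw A R).Lang = A.Lang := by
  refine (A.lang_pruneFw_subset R).antisymm fun w ⟨ρ₀, hρ₀, hI, hF⟩ => ?_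
  obtain ⟨ρ, hρ0, hρ⟩ := exists_seq_of_forall_exists (A.DominatesFrom w ρ₀)
    (fun n q r => (pruneFw A R).δ q (w n) r) hρ₀.dominatesFrom_zero
    fun _ _ h => h.exists_pruneFw_succ hasym htrans hsub
  refine ⟨ρ, fun n => (hρ n).2, hρ0 ▸ hI, fun n => ?_⟩
  obtain ⟨m, hnm, hm⟩ := hF n
  exact ⟨m, hnm, (hρ m).1.mem_F hm⟩

/-- Pruning with `P(id, R)` for `R` an asymmetric transitive relation contained in direct
trace inclusion is good for pruning: the pruned automaton has the same language as `A`
(`A` finite/finitely branching and complete). -/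
theorem prune_id_diIncl_GFP {σ Q : Type} [Fintype Q] (A : BA σ Q)
    (hcomplete : ∀ (q : Q) (a : σ), ∃ q', A.δ q a q')
    (R : Q → Q → Prop)
    (hasym : ∀ x y, R x y → ¬ R y x)
    (htrans : Transitive R)
    (hsub : ∀ x y, R x y → A.diIncl x y) :
    (pruneFw A R).Lang = A.Lang :=
  prune_id_diIncl_GFP_general A R hasym htrans hsub
end

section
/- Pruning with (R, id) for R a backward-trace-inclusion-refining strict order is good for pruning: let A be a Büchi automaton and R an asymmetric transitive relation on states with R ⊆ ⊑bw (backward trace inclusion). Removing every transition (p,σ,r) for which there exists a transition (p',σ,r) with p R p' yields an automaton with the same language as A. -/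
/-- Pruning with `P(R, id)`: simultaneously remove every transition `(p,σ,r)` such that
there exists a transition `(p',σ,r)` with `R p p'`. -/
def pruneBw {σ Q : Type} (A : BA σ Q) (R : Q → Q → Prop) : BA σ Q where
  I := A.I
  F := A.F
  δ := fun p a r => A.δ p a r ∧ ¬ ∃ p', A.δ p' a r ∧ R p p'

/-!
Every initial finite run of `A` can be turned into an initial run of the pruned automaton with
the same word, the same endpoint and at least the same accepting positions. By induction on the
length: if the last transition `(p, a, r)` was pruned because of `(p', a, r)` with `R p p'`,
backward trace inclusion replaces the prefix by a run ending in `p'`, and we recurse on `p'`,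
which terminates because `R` is well founded upwards on the finite state space. The accepting
run of the pruned automaton is then obtained from these finite runs by König's lemma, here in the
form of a cluster point in the compact space `ℕ → Q`.
-/

open Filter Topology

theorem exists_forall_prefix_frequently_eq {Q : Type} [Finite Q] (τ : ℕ → ℕ → Q) :
    ∃ π : ℕ → Q, ∀ n, ∃ᶠ m in atTop, ∀ i ≤ n, τ m i = π i := by
  let _ : TopologicalSpace Q := ⊥
  have : DiscreteTopology Q := ⟨rfl⟩
  obtain ⟨π, -, hπ⟩ := isCompact_univ.exists_mapClusterPt (f := atTop) (u := τ) (by simp)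
  refine ⟨π, fun n => hπ.frequently (p := fun f => ∀ i ≤ n, f i = π i) ?_⟩
  have hcyl : Set.pi (Set.Iic n) (fun i => {π i}) ∈ 𝓝 π :=
    set_pi_mem_nhds (Set.finite_Iic n) fun i _ => by simp
  filter_upwards [hcyl] with f hf i hi using hf i hi

namespace BA
variable {σ Q : Type}

def HasMatchingTrace (B : BA σ Q) (w : ℕ → σ) (m : ℕ) (ρ : ℕ → Q) : Prop :=
  ∃ ρ', B.FinTrace w m ρ' ∧ ρ' 0 ∈ B.I ∧ ρ' m = ρ m ∧ ∀ i ≤ m, ρ i ∈ B.F → ρ' i ∈ B.F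

def glue (m : ℕ) (τ ρ : ℕ → Q) : ℕ → Q := fun i => if i ≤ m then τ i else ρ i

theorem glue_of_le {m i : ℕ} (τ ρ : ℕ → Q) (h : i ≤ m) : glue m τ ρ i = τ i := if_pos h

theorem glue_of_lt {m i : ℕ} (τ ρ : ℕ → Q) (h : m < i) : glue m τ ρ i = ρ i :=
  if_neg (Nat.not_le.2 h)

section
variable {B : BA σ Q} {w : ℕ → σ} {m : ℕ} {τ ρ : ℕ → Q}

theorem FinTrace.glue (hτ : B.FinTrace w m τ) (hlast : B.δ (τ m) (w m) (ρ (m + 1))) :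
    B.FinTrace w (m + 1) (glue m τ ρ) := by
  intro i hi
  rw [glue_of_le τ ρ (Nat.le_of_lt_succ hi)]
  rcases Nat.lt_succ_iff_lt_or_eq.1 hi with hi | rfl
  · rw [glue_of_le τ ρ hi]
    exact hτ i hi
  · rw [glue_of_lt τ ρ (Nat.lt_succ_self i)]
    exact hlast

theorem HasMatchingTrace.succ (h : B.HasMatchingTrace w m ρ)
    (hlast : B.δ (ρ m) (w m) (ρ (m + 1))) : B.HasMatchingTrace w (m + 1) ρ := by
  obtain ⟨ρ', hρ', h0, hend, hacc⟩ := h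
  refine ⟨glue m ρ' ρ, hρ'.glue (hend ▸ hlast), by rwa [glue_of_le _ _ (Nat.zero_le m)],
    glue_of_lt _ _ (Nat.lt_succ_self m), fun i _ hF => ?_⟩
  by_cases hi : i ≤ m
  · rw [glue_of_le _ _ hi]
    exact hacc i hi hF
  · rwa [glue_of_lt _ _ (Nat.lt_of_not_le hi)]

theorem HasMatchingTrace.of_glue (h : B.HasMatchingTrace w (m + 1) (glue m τ ρ))
    (hτ : ∀ i ≤ m, ρ i ∈ B.F → τ i ∈ B.F) : B.HasMatchingTrace w (m + 1) ρ := by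
  obtain ⟨ρ', hρ', h0, hend, hacc⟩ := h
  refine ⟨ρ', hρ', h0, hend.trans (glue_of_lt τ ρ (Nat.lt_succ_self m)), fun i hi hF => ?_⟩
  apply hacc i hi
  by_cases him : i ≤ m
  · rw [glue_of_le τ ρ him]
    exact hτ i him hF
  · rwa [glue_of_lt τ ρ (Nat.lt_of_not_le him)]

end

theorem mem_lang_of_forall_hasMatchingTrace [Finite Q] {B : BA σ Q} {w : ℕ → σ} {ρ : ℕ → Q}
    (h : ∀ m, B.HasMatchingTrace w m ρ) (hfair : B.Fair ρ) : w ∈ B.Lang := by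
  choose τ hτ hτ0 _ hτacc using h
  obtain ⟨π, hπ⟩ := exists_forall_prefix_frequently_eq τ
  refine ⟨π, fun i => ?_, ?_, fun n => ?_⟩
  · obtain ⟨m, hpre, hm⟩ := ((hπ (i + 1)).and_eventually (eventually_gt_atTop i)).exists
    rw [← hpre i i.le_succ, ← hpre (i + 1) le_rfl]
    exact hτ m i hm
  · obtain ⟨m, hpre⟩ := (hπ 0).exists
    rw [← hpre 0 le_rfl]
    exact hτ0 m
  · obtain ⟨j, hj, hF⟩ := hfair n
    obtain ⟨m, hpre, hm⟩ := ((hπ j).and_eventually (eventually_ge_atTop j)).exists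
    exact ⟨j, hj, hpre j le_rfl ▸ hτacc m j hm hF⟩

end BA

theorem pruneBw_lang_subset {σ Q : Type} (A : BA σ Q) (R : Q → Q → Prop) :
    (pruneBw A R).Lang ⊆ A.Lang :=
  fun _ ⟨ρ, hρ, h0, hfair⟩ => ⟨ρ, fun i => (hρ i).1, h0, hfair⟩

section
variable {σ Q : Type} {A : BA σ Q} {R : Q → Q → Prop}

theorem hasMatchingTrace_pruneBw_succ (hwf : WellFounded (flip R))
    (hsub : ∀ x y, R x y → A.bwIncl x y) {w : ℕ → σ} {m : ℕ}
    (ih : ∀ ρ, A.FinTrace w m ρ → ρ 0 ∈ A.I → (pruneBw A R).HasMatchingTrace w m ρ)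
    (ρ : ℕ → Q) (hρ : A.FinTrace w (m + 1) ρ) (h0 : ρ 0 ∈ A.I) :
    (pruneBw A R).HasMatchingTrace w (m + 1) ρ := by
  induction hq : ρ m using hwf.induction generalizing ρ with
  | _ q ihq =>
  have hprefix : A.FinTrace w m ρ := fun i hi => hρ i (Nat.lt_succ_of_lt hi)
  by_cases hpruned : ∃ p', A.δ p' (w m) (ρ (m + 1)) ∧ R (ρ m) p'
  · obtain ⟨p', hδ, hR⟩ := hpruned
    obtain ⟨τ, hτ, hτ0, hτm, hτacc⟩ := hsub _ _ hR w m ρ hprefix h0 rfl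
    refine BA.HasMatchingTrace.of_glue ?_ hτacc
    exact ihq p' (hq ▸ hR) _ (hτ.glue (hτm ▸ hδ)) (by rwa [BA.glue_of_le _ _ (Nat.zero_le m)])
      (by rw [BA.glue_of_le _ _ le_rfl, hτm])
  · exact (ih ρ hprefix h0).succ ⟨hρ m (Nat.lt_succ_self m), hpruned⟩

theorem hasMatchingTrace_pruneBw (hwf : WellFounded (flip R))
    (hsub : ∀ x y, R x y → A.bwIncl x y) {w : ℕ → σ} (m : ℕ) (ρ : ℕ → Q)
    (hρ : A.FinTrace w m ρ) (h0 : ρ 0 ∈ A.I) : (pruneBw A R).HasMatchingTrace w m ρ := by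
  induction m generalizing ρ with
  | zero => exact ⟨ρ, fun i hi => absurd hi (Nat.not_lt_zero i), h0, rfl, fun _ _ hF => hF⟩
  | succ m ih => exact hasMatchingTrace_pruneBw_succ hwf hsub ih ρ hρ h0

end

/-- Pruning with `P(R, id)` for `R` an asymmetric transitive relation contained in
backward trace inclusion is good for pruning: the pruned automaton has the same
language as `A` (a finite-state Büchi automaton). -/
theorem prune_bwIncl_id_GFP {σ Q : Type} [Fintype Q] (A : BA σ Q)
    (R : Q → Q → Prop)
    (hasym : ∀ x y, R x y → ¬ R y x)
    (htrans : Transitive R)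
    (hsub : ∀ x y, R x y → A.bwIncl x y) :
    (pruneBw A R).Lang = A.Lang := by
  have hwf : WellFounded (flip R) := by
    have : IsTrans Q (flip R) := ⟨fun _ _ _ hab hbc => htrans hbc hab⟩
    have : Std.Irrefl (flip R) := ⟨fun a h => hasym a a h h⟩
    exact Finite.wellFounded_of_trans_of_irrefl _
  refine subset_antisymm (pruneBw_lang_subset A R) ?_
  rintro w ⟨ρ, hρ, h0, hfair⟩
  exact BA.mem_lang_of_forall_hasMatchingTrace
    (fun m => hasMatchingTrace_pruneBw hwf hsub m ρ (fun i _ => hρ i) h0) hfair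
end

section
/- Pruning with (backward trace inclusion, strict direct simulation) is good for pruning: for any Büchi automaton A, removing (in parallel) every transition (p,σ,r) such that there exists a transition (p',σ,r') with p ⊑bw p' and r strictly direct-simulated by r' preserves the language of A. -/
namespace BA
variable {σ Q : Type}

/-- `S` is a direct simulation. -/
def IsDiSim (A : BA σ Q) (S : Q → Q → Prop) : Prop :=
  ∀ p q, S p q → (p ∈ A.F → q ∈ A.F) ∧
    ∀ a p', A.δ p a p' → ∃ q', A.δ q a q' ∧ S p' q'

/-- Direct simulation: the largest direct simulation relation. -/
def diSim (A : BA σ Q) (p q : Q) : Prop :=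
  ∃ S, IsDiSim A S ∧ S p q

/-- Strict direct simulation `⊑^di ∖ (⊑^di)⁻¹`. -/
def diSimStrict (A : BA σ Q) (p q : Q) : Prop :=
  diSim A p q ∧ ¬ diSim A q p

end BA

/-- Pruning with `P(⊑bw, ≺^di)`: simultaneously remove every transition `(p,σ,r)` such
that some transition `(p',σ,r')` exists with `p ⊑bw p'` and `r ≺^di r'`. -/
def pruneBwDi {σ Q : Type} (A : BA σ Q) : BA σ Q where
  I := A.I
  F := A.F
  δ := fun p a r => A.δ p a r ∧
    ¬ ∃ p' r', A.δ p' a r' ∧ A.bwIncl p p' ∧ A.diSimStrict r r'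

/-! A pruned transition of a run can be replaced by the transition that witnesses its pruning:
backward trace inclusion rebuilds the prefix with at least as many accepting states, and direct
simulation continues the run from the strictly larger target state. Repeating this on the first `n`
transitions strictly increases the run in a colexicographic order built from direct simulation,
which is well founded on the finitely many prefixes of length `n`, so every prefix of an accepting
run can be made to survive pruning. A cluster point of these runs (Kőnig's lemma, via an
ultrafilter) is an accepting run of the pruned automaton. -/

open Filter

def colexLT {ι α : Type*} [LT ι] (r : α → α → Prop) (f g : ι → α) : Prop :=
  ∃ i, (r (f i) (g i) ∧ ¬ r (g i) (f i)) ∧ ∀ j, i < j → r (f j) (g j)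

section Colex

variable {ι α : Type*} [LinearOrder ι] {r : α → α → Prop}

theorem colexLT_irrefl (f : ι → α) : ¬ colexLT r f f :=
  fun ⟨_, ⟨hi, hi'⟩, _⟩ => hi' hi

theorem colexLT_trans [IsTrans α r] {f g h : ι → α} (hfg : colexLT r f g) (hgh : colexLT r g h) :
    colexLT r f h := by
  obtain ⟨i, ⟨hi, hi'⟩, hfg⟩ := hfg
  obtain ⟨k, ⟨hk, hk'⟩, hgh⟩ := hgh
  rcases lt_trichotomy i k with hik | rfl | hki
  · exact ⟨k, ⟨_root_.trans (hfg k hik) hk, fun hkf => hk' (_root_.trans hkf (hfg k hik))⟩,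
      fun j hj => _root_.trans (hfg j (hik.trans hj)) (hgh j hj)⟩
  · exact ⟨i, ⟨_root_.trans hi hk, fun hif => hi' (_root_.trans hk hif)⟩,
      fun j hj => _root_.trans (hfg j hj) (hgh j hj)⟩
  · exact ⟨i, ⟨_root_.trans hi (hgh i hki), fun hif => hi' (_root_.trans (hgh i hki) hif)⟩,
      fun j hj => _root_.trans (hfg j hj) (hgh j (hki.trans hj))⟩

theorem wellFounded_swap_colexLT [IsTrans α r] [Finite ι] [Finite α] :
    WellFounded (Function.swap (colexLT r : (ι → α) → (ι → α) → Prop)) :=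
  haveI : IsTrans (ι → α) (Function.swap (colexLT r)) := ⟨fun _ _ _ h₁ h₂ => colexLT_trans h₂ h₁⟩
  haveI : Std.Irrefl (Function.swap (colexLT r : (ι → α) → (ι → α) → Prop)) :=
    ⟨colexLT_irrefl⟩
  Finite.wellFounded_of_trans_of_irrefl _

end Colex

theorem exists_seq_of_forall_exists_s6 {α : Type*} {P : ℕ → α → Prop} {R : ℕ → α → α → Prop}
    (step : ∀ j x, P j x → ∃ y, R j x y ∧ P (j + 1) y) {i : ℕ} {a : α} (ha : P i a) :
    ∃ s : ℕ → α, s i = a ∧ ∀ j, i ≤ j → P j (s j) ∧ R j (s j) (s (j + 1)) := by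
  choose g hgR hgP using step
  let u : (k : ℕ) → {x // P (i + k) x} :=
    fun k => Nat.rec ⟨a, ha⟩ (fun k x => ⟨g (i + k) x.1 x.2, hgP _ _ x.2⟩) k
  refine ⟨fun j => (u (j - i)).1, by beta_reduce; rw [Nat.sub_self]; rfl, fun j hj => ?_⟩
  obtain ⟨k, rfl⟩ := Nat.exists_eq_add_of_le hj
  beta_reduce
  rw [Nat.add_sub_cancel_left, show i + k + 1 - i = k + 1 by omega]
  exact ⟨(u k).2, hgR _ _ (u k).2⟩

theorem exists_frequently_eqOn_Iic {α : Type*} [Finite α] (R : ℕ → ℕ → α) :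
    ∃ L : ℕ → α, ∀ m, ∃ᶠ n in atTop, ∀ j ≤ m, R n j = L j := by
  choose L hL using fun j => Ultrafilter.eq_pure_of_finite ((hyperfilter ℕ).map (R · j))
  refine ⟨L, fun m => ?_⟩
  have hev : ∀ᶠ n in hyperfilter ℕ, ∀ j ≤ m, R n j = L j := by
    refine (Set.finite_Iic m).eventually_all.2 fun j _ => ?_
    have : {L j} ∈ (hyperfilter ℕ).map (R · j) := by rw [hL j]; exact Ultrafilter.mem_pure.2 rfl
    exact Ultrafilter.mem_map.1 this
  rw [← Nat.cofinite_eq_atTop]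
  exact hev.frequently.filter_mono hyperfilter_le_cofinite

namespace BA

variable {σ Q : Type} (A : BA σ Q)

theorem isDiSim_diSim : A.IsDiSim A.diSim := by
  rintro p q ⟨S, hS, hpq⟩
  refine ⟨(hS p q hpq).1, fun a p' hp' => ?_⟩
  obtain ⟨q', hq', hS'⟩ := (hS p q hpq).2 a p' hp'
  exact ⟨q', hq', S, hS, hS'⟩

variable {A}

theorem diSim.mem_F {p q : Q} (h : A.diSim p q) : p ∈ A.F → q ∈ A.F :=
  (A.isDiSim_diSim p q h).1

theorem diSim.exists_step {p q p' : Q} {a : σ} (h : A.diSim p q) (hp : A.δ p a p') :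
    ∃ q', A.δ q a q' ∧ A.diSim p' q' :=
  (A.isDiSim_diSim p q h).2 a p' hp

theorem diSim.trans {p q r : Q} (hpq : A.diSim p q) (hqr : A.diSim q r) : A.diSim p r := by
  refine ⟨fun x z => ∃ y, A.diSim x y ∧ A.diSim y z, ?_, q, hpq, hqr⟩
  rintro x z ⟨y, hxy, hyz⟩
  refine ⟨fun hx => hyz.mem_F (hxy.mem_F hx), fun a x' hx' => ?_⟩
  obtain ⟨y', hy', hxy'⟩ := hxy.exists_step hx'
  obtain ⟨z', hz', hyz'⟩ := hyz.exists_step hy'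
  exact ⟨z', hz', y', hxy', hyz'⟩

instance : IsTrans Q A.diSim := ⟨fun _ _ _ => diSim.trans⟩

theorem InfTrace.exists_diSim_from {w : ℕ → σ} {ρ : ℕ → Q} (hρ : A.InfTrace w ρ) {i : ℕ} {q : Q}
    (hq : A.diSim (ρ i) q) :
    ∃ s : ℕ → Q, s i = q ∧ ∀ j, i ≤ j → A.diSim (ρ j) (s j) ∧ A.δ (s j) (w j) (s (j + 1)) :=
  exists_seq_of_forall_exists_s6 (P := fun j x => A.diSim (ρ j) x) (R := fun j x y => A.δ x (w j) y)
    (fun j _ hx => hx.exists_step (hρ j)) hq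

theorem infTrace_splice {w : ℕ → σ} {π s : ℕ → Q} {i : ℕ} (hπ : A.FinTrace w i π)
    (hi : A.δ (π i) (w i) (s (i + 1))) (hs : ∀ j, i < j → A.δ (s j) (w j) (s (j + 1))) :
    A.InfTrace w (fun j => if j ≤ i then π j else s j) := by
  intro j
  rcases lt_trichotomy j i with hj | rfl | hj
  · simpa only [if_pos hj.le, if_pos (Nat.succ_le_of_lt hj)] using hπ j hj
  · simpa only [le_refl, if_true, Nat.not_succ_le_self, if_false] using hi
  · simpa only [if_neg hj.not_ge, if_neg (by omega : ¬ j + 1 ≤ i)] using hs j hj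

theorem InfTrace.exists_improve_of_pruned {w : ℕ → σ} {ρ : ℕ → Q} (hρ : A.InfTrace w ρ)
    (h0 : ρ 0 ∈ A.I) {i : ℕ}
    (hpruned : ∃ p' r', A.δ p' (w i) r' ∧ A.bwIncl (ρ i) p' ∧ A.diSimStrict (ρ (i + 1)) r') :
    ∃ ρ', A.InfTrace w ρ' ∧ ρ' 0 ∈ A.I ∧ (∀ j, ρ j ∈ A.F → ρ' j ∈ A.F) ∧
      A.diSimStrict (ρ (i + 1)) (ρ' (i + 1)) ∧ ∀ j, i < j → A.diSim (ρ (j + 1)) (ρ' (j + 1)) := by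
  obtain ⟨p', r', hp'r', hbw, hstrict⟩ := hpruned
  obtain ⟨π, hπ, hπ0, hπi, hπF⟩ := hbw w i ρ (fun j _ => hρ j) h0 rfl
  obtain ⟨s, hsi, hs⟩ := hρ.exists_diSim_from hstrict.1
  have hspliced_gt : ∀ j, i < j → (if j ≤ i then π j else s j) = s j :=
    fun j hj => if_neg hj.not_ge
  refine ⟨_, infTrace_splice hπ (hπi ▸ hsi ▸ hp'r') fun j hj => (hs j hj).2, by simpa using hπ0,
    fun j hj => ?_, ?_, fun j hj => ?_⟩
  · by_cases hji : j ≤ i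
    · simpa only [if_pos hji] using hπF j hji hj
    · simpa only [if_neg hji] using (hs j (by omega)).1.mem_F hj
  · rwa [hspliced_gt _ i.lt_succ_self, hsi]
  · rw [hspliced_gt _ (by omega)]
    exact (hs _ (by omega)).1

theorem InfTrace.exists_unpruned_prefix [Finite Q] {w : ℕ → σ} (n : ℕ) {ρ : ℕ → Q}
    (hρ : A.InfTrace w ρ) (h0 : ρ 0 ∈ A.I) :
    ∃ ρ', A.InfTrace w ρ' ∧ ρ' 0 ∈ A.I ∧ (∀ j, ρ j ∈ A.F → ρ' j ∈ A.F) ∧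
      ∀ i < n, (pruneBwDi A).δ (ρ' i) (w i) (ρ' (i + 1)) := by
  have hwf := InvImage.wf (fun (ρ : ℕ → Q) (k : Fin n) => ρ (k + 1 : ℕ))
    (wellFounded_swap_colexLT (r := A.diSim))
  induction ρ using hwf.induction with | _ ρ ih =>
  by_cases hunpruned : ∀ i < n, (pruneBwDi A).δ (ρ i) (w i) (ρ (i + 1))
  · exact ⟨ρ, hρ, h0, fun _ => id, hunpruned⟩
  push Not at hunpruned
  obtain ⟨i, hin, hpruned⟩ := hunpruned
  obtain ⟨ρ₁, hρ₁, h0₁, hF₁, hstrict, hweak⟩ :=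
    hρ.exists_improve_of_pruned h0 (of_not_not fun h => hpruned ⟨hρ i, h⟩)
  obtain ⟨ρ', hρ', h0', hF', hunpruned'⟩ :=
    ih ρ₁ ⟨⟨i, hin⟩, hstrict, fun j hj => hweak j hj⟩ hρ₁ h0₁
  exact ⟨ρ', hρ', h0', fun j hj => hF' j (hF₁ j hj), hunpruned'⟩

end BA

/-- Pruning with (backward trace inclusion, strict direct simulation) is good for
pruning: for any finite-state Büchi automaton `A`, the pruned automaton has the same
language as `A`. -/
theorem prune_bwIncl_diSimStrict_GFP {σ Q : Type} [Fintype Q] (A : BA σ Q) :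
    (pruneBwDi A).Lang = A.Lang := by
  ext w
  refine ⟨fun ⟨ρ, hρ, h0, hfair⟩ => ⟨ρ, fun i => (hρ i).1, h0, hfair⟩, ?_⟩
  rintro ⟨ρ, hρ, h0, hfair⟩
  choose R _ hR0 hRF hRδ using fun n => hρ.exists_unpruned_prefix n h0
  obtain ⟨L, hL⟩ := exists_frequently_eqOn_Iic R
  refine ⟨L, fun j => ?_, ?_, fun k => ?_⟩
  · obtain ⟨n, hRL, hjn⟩ := ((hL (j + 1)).and_eventually (eventually_gt_atTop j)).exists
    rw [← hRL j (by omega), ← hRL (j + 1) le_rfl]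
    exact hRδ n j hjn
  · obtain ⟨n, hRL⟩ := (hL 0).exists
    exact hRL 0 le_rfl ▸ hR0 n
  · obtain ⟨m, hkm, hm⟩ := hfair k
    obtain ⟨n, hRL⟩ := (hL m).exists
    exact ⟨m, hkm, hRL m le_rfl ▸ hRF n m hm⟩
end

section
/- If A is quotiented w.r.t. backward simulation (A = A/⊑^bw), then pruning with (strict backward simulation, direct trace inclusion) is good for pruning: removing every transition (p,σ,r) such that some transition (p',σ,r') exists with p strictly backward-simulated by p' and r ⊑di r' preserves the language. -/
namespace BA
variable {σ Q : Type}

/-- `S` is a backward simulation. -/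
def IsBwSim (A : BA σ Q) (S : Q → Q → Prop) : Prop :=
  ∀ p q, S p q → (p ∈ A.F → q ∈ A.F) ∧ (p ∈ A.I → q ∈ A.I) ∧
    ∀ a p', A.δ p' a p → ∃ q', A.δ q' a q ∧ S p' q'

/-- Backward simulation: the largest backward simulation relation. -/
def bwSim (A : BA σ Q) (p q : Q) : Prop :=
  ∃ S, IsBwSim A S ∧ S p q

/-- Strict backward simulation `⊑^bw ∖ (⊑^bw)⁻¹`. -/
def bwSimStrict (A : BA σ Q) (p q : Q) : Prop :=
  bwSim A p q ∧ ¬ bwSim A q p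

end BA

/-- Pruning with `P(≺^bw, ⊑di)`: simultaneously remove every transition `(p,σ,r)` such
that some transition `(p',σ,r')` exists with `p ≺^bw p'` and `r ⊑di r'`. -/
def pruneBwSimDiIncl {σ Q : Type} (A : BA σ Q) : BA σ Q where
  I := A.I
  F := A.F
  δ := fun p a r => A.δ p a r ∧
    ¬ ∃ p' r', A.δ p' a r' ∧ A.bwSimStrict p p' ∧ A.diIncl r r'

/-!
Among the initial runs on `w` that are accepting wherever a given accepting run is, choose one
that is lexicographically greatest for the rank `q ↦ #{x | x ⊑^bw q}`; it exists by a greedy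
construction, since `Q` is finite. If such a run `g` took a pruned transition `g i → g (i+1)`,
witnessed by `p' → r'`, then backward simulation from `p'` rebuilds the prefix and direct trace
inclusion from `r'` rebuilds the suffix, giving a run of the same kind that dominates `g`
pointwise up to `i` and differs from it at `i`. At the first position where the two runs differ,
`A = A/⊑^bw` makes the domination strict, so the rank strictly increases there, contradicting
the choice of `g`.
-/

section Greedy

variable {α β : Type*} [Finite α] [LinearOrder β] {S : Set (ℕ → α)}

theorem exists_mem_agree_forall_le_at (f : α → β) (k : ℕ) {ρ : ℕ → α} (hρ : ρ ∈ S) :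
    ∃ ρ' ∈ S, (∀ j < k, ρ' j = ρ j) ∧
      ∀ τ ∈ S, (∀ j < k, τ j = ρ j) → f (τ k) ≤ f (ρ' k) := by
  let T := {τ ∈ S | ∀ j < k, τ j = ρ j}
  obtain ⟨_, ⟨ρ', hρ', rfl⟩, hmax⟩ :=
    Set.exists_max_image ((· k) '' T) f (Set.toFinite _) ⟨ρ k, ρ, ⟨hρ, fun _ _ => rfl⟩, rfl⟩
  exact ⟨ρ', hρ'.1, hρ'.2, fun τ hτ hag => hmax _ ⟨τ, ⟨hτ, hag⟩, rfl⟩⟩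

/-- A sequence that is lexicographically greatest for `f` among the elements of `S`, in the sense
that each of its prefixes extends to an element of `S`. -/
theorem exists_lexMax_of_finite (f : α → β) (hS : S.Nonempty) :
    ∃ g : ℕ → α, (∀ k, ∃ ρ ∈ S, ∀ j ≤ k, ρ j = g j) ∧
      ∀ k, ∀ ρ ∈ S, (∀ j < k, ρ j = g j) → f (ρ k) ≤ f (g k) := by
  choose! next hnextS hnextAgree hnextMax using
    fun k (ρ : ℕ → α) (hρ : ρ ∈ S) => exists_mem_agree_forall_le_at f k hρ
  obtain ⟨ρ₀, hρ₀⟩ := hS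
  let seq : ℕ → ℕ → α := fun k => Nat.rec ρ₀ (fun k ρ => next k ρ) k
  have hseqS : ∀ k, seq k ∈ S := fun k => by
    induction k with
    | zero => exact hρ₀
    | succ k ih => exact hnextS k (seq k) ih
  have hseq : ∀ j k, j < k → seq k j = seq (j + 1) j := fun j k hjk => by
    induction k, hjk using Nat.le_induction with
    | base => rfl
    | succ k hjk ih => rw [← ih]; exact hnextAgree k (seq k) (hseqS k) j hjk
  refine ⟨fun j => seq (j + 1) j, fun k => ⟨seq (k + 1), hseqS (k + 1), fun j hj => ?_⟩,
    fun k ρ hρ hag => ?_⟩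
  · exact hseq j (k + 1) (by omega)
  · exact hnextMax k (seq k) (hseqS k) ρ hρ fun j hj => (hag j hj).trans (hseq j k hj).symm

end Greedy

namespace BA

variable {σ Q : Type} {A : BA σ Q}

theorem isBwSim_bwSim (A : BA σ Q) : A.IsBwSim A.bwSim := by
  rintro p q ⟨S, hS, hpq⟩
  obtain ⟨hF, hI, hδ⟩ := hS p q hpq
  refine ⟨hF, hI, fun a p' hp' => ?_⟩
  obtain ⟨q', hq', hS'⟩ := hδ a p' hp'
  exact ⟨q', hq', S, hS, hS'⟩

theorem bwSim_refl (A : BA σ Q) (p : Q) : A.bwSim p p :=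
  ⟨Eq, fun _ _ h => h ▸ ⟨id, id, fun _ p' hp' => ⟨p', hp', rfl⟩⟩, rfl⟩

namespace bwSim

variable {p q : Q}

theorem mem_F (h : A.bwSim p q) (hp : p ∈ A.F) : q ∈ A.F :=
  (A.isBwSim_bwSim p q h).1 hp

theorem mem_I (h : A.bwSim p q) (hp : p ∈ A.I) : q ∈ A.I :=
  (A.isBwSim_bwSim p q h).2.1 hp

theorem exists_pred (h : A.bwSim p q) {a : σ} {p' : Q} (hp' : A.δ p' a p) :
    ∃ q', A.δ q' a q ∧ A.bwSim p' q' :=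
  (A.isBwSim_bwSim p q h).2.2 a p' hp'

theorem trans {r : Q} (hpq : A.bwSim p q) (hqr : A.bwSim q r) : A.bwSim p r := by
  refine ⟨fun x z => ∃ y, A.bwSim x y ∧ A.bwSim y z, ?_, q, hpq, hqr⟩
  rintro x z ⟨y, hxy, hyz⟩
  refine ⟨hyz.mem_F ∘ hxy.mem_F, hyz.mem_I ∘ hxy.mem_I, fun a x' hx' => ?_⟩
  obtain ⟨y', hy', hxy'⟩ := hxy.exists_pred hx'
  obtain ⟨z', hz', hyz'⟩ := hyz.exists_pred hy'
  exact ⟨z', hz', y', hxy', hyz'⟩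

end bwSim

theorem bwSimStrict.ne {p q : Q} (h : A.bwSimStrict p q) : p ≠ q :=
  fun hpq => h.2 (hpq ▸ A.bwSim_refl p)

noncomputable def bwRank (A : BA σ Q) (q : Q) : ℕ :=
  {x | A.bwSim x q}.ncard

theorem bwRank_lt_of_bwSimStrict [Finite Q] {p q : Q} (h : A.bwSimStrict p q) :
    A.bwRank p < A.bwRank q :=
  Set.ncard_lt_ncard
    ⟨fun _ hx => bwSim.trans hx h.1, fun hsub => h.2 (hsub (A.bwSim_refl q))⟩

def TraceFrom (A : BA σ Q) (w : ℕ → σ) (ρ : ℕ → Q) (n : ℕ) : Prop :=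
  ∀ j ≥ n, A.δ (ρ j) (w j) (ρ (j + 1))

theorem TraceFrom.update {w : ℕ → σ} {ρ : ℕ → Q} {i : ℕ} {x : Q} (hρ : A.TraceFrom w ρ (i + 1))
    (hx : A.δ x (w i) (ρ (i + 1))) : A.TraceFrom w (Function.update ρ i x) i := by
  intro j hj
  rw [Function.update_of_ne (show j + 1 ≠ i by omega)]
  rcases hj.eq_or_lt with rfl | hj
  · rwa [Function.update_self]
  · rw [Function.update_of_ne (by omega)]; exact hρ j hj

theorem exists_infTrace_bwSim_prefix {w : ℕ → σ} {g : ℕ → Q} (hg : A.InfTrace w g) (i : ℕ)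
    {ρ : ℕ → Q} (hρ : A.TraceFrom w ρ i) (hi : A.bwSim (g i) (ρ i)) :
    ∃ τ, A.InfTrace w τ ∧ (∀ j ≥ i, τ j = ρ j) ∧ ∀ j ≤ i, A.bwSim (g j) (τ j) := by
  induction i generalizing ρ with
  | zero => exact ⟨ρ, fun j => hρ j j.zero_le, fun _ _ => rfl, fun j hj => by
      rwa [Nat.le_zero.mp hj]⟩
  | succ i ih =>
    obtain ⟨q', hq', hsim⟩ := hi.exists_pred (hg i)
    obtain ⟨τ, hτ, hτρ, hτsim⟩ := ih (hρ.update hq') (by rwa [Function.update_self])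
    have hτρ' : ∀ j ≥ i + 1, τ j = ρ j := fun j hj => by
      rw [hτρ j (by omega), Function.update_of_ne (by omega)]
    refine ⟨τ, hτ, hτρ', fun j hj => ?_⟩
    rcases hj.lt_or_eq with hj | rfl
    · exact hτsim j (by omega)
    · rw [hτρ' _ le_rfl]; exact hi

theorem diIncl.exists_suffix {w : ℕ → σ} {ρ : ℕ → Q} {n : ℕ} {r : Q} (h : A.diIncl (ρ n) r)
    (hρ : A.TraceFrom w ρ n) :
    ∃ ρ' : ℕ → Q, ρ' n = r ∧ A.TraceFrom w ρ' n ∧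
      ∀ j ≥ n, ρ j ∈ A.F → ρ' j ∈ A.F := by
  obtain ⟨s, hs, hs0, hsF⟩ := h (fun m => w (n + m)) (fun m => ρ (n + m))
    (fun m => hρ (n + m) (by omega)) rfl
  have hshift : ∀ j ≥ n, n + (j - n) = j := fun j hj => by omega
  refine ⟨fun j => if j < n then ρ j else s (j - n), by simpa, ?_, ?_⟩
  · intro j hj
    have hs' := hs (j - n)
    dsimp only at hs'
    rw [hshift j hj, show j - n + 1 = j + 1 - n by omega] at hs'
    simpa [show ¬j < n by omega, show ¬j + 1 < n by omega] using hs'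
  · intro j hj hF
    have hsF' := hsF (j - n)
    rw [hshift j hj] at hsF'
    simpa [show ¬j < n by omega] using hsF' hF

def dominatingRuns (A : BA σ Q) (w : ℕ → σ) (ρ₀ : ℕ → Q) : Set (ℕ → Q) :=
  {ρ | A.InfTrace w ρ ∧ ρ 0 ∈ A.I ∧ ∀ j, ρ₀ j ∈ A.F → ρ j ∈ A.F}

variable {w : ℕ → σ} {ρ₀ g : ℕ → Q}

theorem mem_dominatingRuns_of_forall_prefix
    (h : ∀ k, ∃ ρ ∈ A.dominatingRuns w ρ₀, ∀ j ≤ k, ρ j = g j) :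
    g ∈ A.dominatingRuns w ρ₀ := by
  refine ⟨fun j => ?_, ?_, fun j hj => ?_⟩
  · obtain ⟨ρ, hρ, hag⟩ := h (j + 1)
    rw [← hag j (by omega), ← hag (j + 1) le_rfl]
    exact hρ.1 j
  · obtain ⟨ρ, hρ, hag⟩ := h 0
    exact hag 0 le_rfl ▸ hρ.2.1
  · obtain ⟨ρ, hρ, hag⟩ := h j
    exact hag j le_rfl ▸ hρ.2.2 j hj

theorem exists_mem_dominatingRuns_of_pruned (hg : g ∈ A.dominatingRuns w ρ₀) {i : ℕ} {p' r' : Q}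
    (hδ : A.δ p' (w i) r') (hp : A.bwSim (g i) p') (hr : A.diIncl (g (i + 1)) r') :
    ∃ τ ∈ A.dominatingRuns w ρ₀, τ i = p' ∧ ∀ j ≤ i, A.bwSim (g j) (τ j) := by
  obtain ⟨hgT, hgI, hgF⟩ := hg
  obtain ⟨ρ, hρr, hρ, hρF⟩ := hr.exists_suffix (fun j _ => hgT j)
  obtain ⟨τ, hτ, hτρ, hsim⟩ := exists_infTrace_bwSim_prefix hgT i
    (hρ.update (x := p') (by rwa [hρr])) (by rwa [Function.update_self])
  refine ⟨τ, ⟨hτ, (hsim 0 (by omega)).mem_I hgI, fun j hj => ?_⟩, ?_, hsim⟩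
  · rcases le_or_gt j i with hji | hji
    · exact (hsim j hji).mem_F (hgF j hj)
    · rw [hτρ j hji.le, Function.update_of_ne (by omega)]
      exact hρF j hji (hgF j hj)
  · rw [hτρ i le_rfl, Function.update_self]

end BA

open BA in
/-- If `A` is already quotiented w.r.t. backward simulation (no two distinct states are
backward-simulation equivalent), then pruning with (strict backward simulation, direct
trace inclusion) is good for pruning: the pruned automaton has the same language. -/
theorem prune_bwSimStrict_diIncl_GFP {σ Q : Type} [Fintype Q] (A : BA σ Q)
    (hquot : ∀ x y, A.bwSim x y → A.bwSim y x → x = y) :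
    (pruneBwSimDiIncl A).Lang = A.Lang := by
  classical
  refine Set.Subset.antisymm (fun w ⟨ρ, hρ, hI, hF⟩ => ⟨ρ, fun i => (hρ i).1, hI, hF⟩) ?_
  rintro w ⟨ρ₀, hρ₀, hI, hF⟩
  obtain ⟨g, hpre, hmax⟩ := exists_lexMax_of_finite A.bwRank
    (S := A.dominatingRuns w ρ₀) ⟨ρ₀, hρ₀, hI, fun _ h => h⟩
  have hg := mem_dominatingRuns_of_forall_prefix hpre
  refine ⟨g, fun i => ⟨hg.1 i, ?_⟩, hg.2.1, fun n => ?_⟩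
  · rintro ⟨p', r', hδ, hstrict, hdi⟩
    obtain ⟨τ, hτ, hτi, hsim⟩ := exists_mem_dominatingRuns_of_pruned hg hδ hstrict.1 hdi
    have hne : ∃ k, τ k ≠ g k := ⟨i, hτi ▸ hstrict.ne.symm⟩
    have hk : Nat.find hne ≤ i := Nat.find_min' hne (hτi ▸ hstrict.ne.symm)
    have hsimk := hsim _ hk
    have hstrictk : A.bwSimStrict (g (Nat.find hne)) (τ (Nat.find hne)) :=
      ⟨hsimk, fun h => Nat.find_spec hne (hquot _ _ h hsimk)⟩
    exact (hmax _ τ hτ fun j hj => not_not.mp (Nat.find_min hne hj)).not_gt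
      (bwRank_lt_of_bwSimStrict hstrictk)
  · obtain ⟨m, hnm, hm⟩ := hF n
    exact ⟨m, hnm, hg.2.2 m hm⟩
end

section
/- The union of the two GFP relations (id, strict direct simulation) and (strict backward simulation, id) is in general not good for pruning: there exists a 4-state Büchi automaton in which pruning simultaneously with both relations removes a word from the language. -/
/-- Pruning simultaneously w.r.t. the union `P(id, ≺^di) ∪ P(≺^bw, id)`:
remove every transition `(p,σ,r)` dominated either by some `(p,σ,r')` with `r ≺^di r'`
or by some `(p',σ,r)` with `p ≺^bw p'`. -/
def pruneUnion {σ Q : Type} (A : BA σ Q) : BA σ Q where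
  I := A.I
  F := A.F
  δ := fun p a r => A.δ p a r ∧
    ¬ ((∃ r', A.δ p a r' ∧ A.diSimStrict r r') ∨ (∃ p', A.δ p' a r ∧ A.bwSimStrict p p'))

/-! In the automaton with transitions `p →a q`, `p →a,b r`, `q →a,b s`, `r →a s`, `s →c s`, the
word `a a c^ω` has exactly two runs, `p q s s …` and `p r s s …`. Since `r ≺^di q`, the transition
`p →a r` is pruned in favour of `p →a q`; since `q ≺^bw r`, the transition `q →a s` is pruned in
favour of `r →a s`. Each pruning alone keeps one of the runs, but together they destroy both.
The letter `b` is what makes both simulations strict. -/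

namespace BA

variable {σ Q : Type} (A : BA σ Q)

theorem not_diSim_of_stuck {p q p' : Q} {a : σ} (hp : A.δ p a p') (hq : ∀ q', ¬ A.δ q a q') :
    ¬ A.diSim p q := by
  rintro ⟨S, hS, hpq⟩
  obtain ⟨q', hq', -⟩ := (hS p q hpq).2 a p' hp
  exact hq q' hq'

theorem not_bwSim_of_stuck {p q p' : Q} {a : σ} (hp : A.δ p' a p) (hq : ∀ q', ¬ A.δ q' a q) :
    ¬ A.bwSim p q := by
  rintro ⟨S, hS, hpq⟩
  obtain ⟨q', hq', -⟩ := (hS p q hpq).2.2 a p' hp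
  exact hq q' hq'

end BA

section PruneUnion

variable {σ Q : Type} {A : BA σ Q} {p r : Q} {a : σ}

theorem not_pruneUnion_δ_of_diSimStrict {r' : Q} (h : A.δ p a r') (hr : A.diSimStrict r r') :
    ¬ (pruneUnion A).δ p a r :=
  fun h' => h'.2 (.inl ⟨r', h, hr⟩)

theorem not_pruneUnion_δ_of_bwSimStrict {p' : Q} (h : A.δ p' a r) (hp : A.bwSimStrict p p') :
    ¬ (pruneUnion A).δ p a r :=
  fun h' => h'.2 (.inr ⟨p', h, hp⟩)

end PruneUnion

namespace UnionCounterexample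

def transitions : Finset (Fin 4 × Fin 3 × Fin 4) :=
  {(0, 0, 1), (0, 0, 2), (0, 1, 2), (1, 0, 3), (1, 1, 3), (2, 0, 3), (3, 2, 3)}

/-- States `p, q, r, s` are `0, 1, 2, 3`; letters `a, b, c` are `0, 1, 2`. -/
def A : BA (Fin 3) (Fin 4) where
  I := {0}
  F := {3}
  δ p a r := (p, a, r) ∈ transitions

instance (p : Fin 4) : Decidable (p ∈ A.I) := inferInstanceAs (Decidable (p = 0))

instance (p : Fin 4) : Decidable (p ∈ A.F) := inferInstanceAs (Decidable (p = 3))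

instance (p : Fin 4) (a : Fin 3) (r : Fin 4) : Decidable (A.δ p a r) :=
  inferInstanceAs (Decidable ((p, a, r) ∈ transitions))

theorem diSimStrict_two_one : A.diSimStrict 2 1 := by
  refine ⟨⟨fun p q => (p, q) ∈ ({(2, 1), (3, 3)} : Finset _), by unfold BA.IsDiSim; decide,
    by decide⟩, ?_⟩
  exact A.not_diSim_of_stuck (a := 1) (p' := 3) (by decide) (by decide)

theorem bwSimStrict_one_two : A.bwSimStrict 1 2 := by
  refine ⟨⟨fun p q => (p, q) ∈ ({(1, 2), (0, 0)} : Finset _), by unfold BA.IsBwSim; decide,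
    by decide⟩, ?_⟩
  exact A.not_bwSim_of_stuck (a := 1) (p' := 0) (by decide) (by decide)

def w (n : ℕ) : Fin 3 := if n < 2 then 0 else 2

theorem w_mem_lang : w ∈ A.Lang := by
  refine ⟨fun n => if n = 0 then 0 else if n = 1 then 1 else 3, ?_, rfl, ?_⟩
  · rintro (_ | _ | n) <;> simp [A, w, transitions]
  · exact fun n => ⟨n + 2, by omega, by simp [A]⟩

theorem pruneUnion_δ_zero_zero {r : Fin 4} (h : (pruneUnion A).δ 0 0 r) : r = 1 := by
  rcases (by decide : ∀ r, A.δ 0 0 r → r = 1 ∨ r = 2) r h.1 with rfl | rfl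
  · rfl
  · exact absurd h (not_pruneUnion_δ_of_diSimStrict (r' := 1) (by decide) diSimStrict_two_one)

theorem not_pruneUnion_δ_one_zero (r : Fin 4) : ¬ (pruneUnion A).δ 1 0 r := by
  intro h
  obtain rfl : r = 3 := (by decide : ∀ r, A.δ 1 0 r → r = 3) r h.1
  exact not_pruneUnion_δ_of_bwSimStrict (p' := 2) (by decide) bwSimStrict_one_two h

theorem w_not_mem_lang_pruneUnion : w ∉ (pruneUnion A).Lang := by
  rintro ⟨ρ, hρ, hρ0, -⟩
  have hρ1 : ρ 1 = 1 := pruneUnion_δ_zero_zero (hρ0 ▸ hρ 0)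
  exact not_pruneUnion_δ_one_zero (ρ 2) (hρ1 ▸ hρ 1)

end UnionCounterexample

/-- The union of the two GFP relations `P(id, ≺^di)` and `P(≺^bw, id)` is in general not
good for pruning: there is a 4-state Büchi automaton (over a 3-letter alphabet) in which
pruning simultaneously with both relations removes a word from the language. -/
theorem union_not_GFP :
    ∃ (A : BA (Fin 3) (Fin 4)) (w : ℕ → Fin 3),
      w ∈ A.Lang ∧ w ∉ (pruneUnion A).Lang :=
  ⟨_, _, UnionCounterexample.w_mem_lang, UnionCounterexample.w_not_mem_lang_pruneUnion⟩
end

section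
/- (id, strict delayed simulation) is not good for pruning: there exists a 2-state Büchi automaton A with A = A/⊑^de such that removing a transition (p,a,q) dominated via strict delayed simulation (q ≺^de p) makes the language empty, although the original language is nonempty. -/
namespace BA
variable {σ Q : Type}

/-- The delayed winning condition on a pair of traces: every accepting position of the
first trace is followed (at the same or a later index) by an accepting position of the
second. -/
def Cde (A : BA σ Q) (ρ τ : ℕ → Q) : Prop :=
  ∀ i, ρ i ∈ A.F → ∃ j, i ≤ j ∧ τ j ∈ A.F

end BA

/-- A Duplicator strategy is causal: its move at round `i` (producing Duplicator's
`(i+1)`-st state) only depends on the word up to position `i` and on Spoiler's states up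
to position `i+1`. -/
def Causal1 {σ Q : Type} (f : ℕ → (ℕ → σ) → (ℕ → Q) → Q) : Prop :=
  ∀ i (w w' : ℕ → σ) (ρ ρ' : ℕ → Q),
    (∀ j ≤ i, w j = w' j) → (∀ j ≤ i + 1, ρ j = ρ' j) → f i w ρ = f i w' ρ'

/-- The Duplicator trace produced by playing strategy `f` from `q` against Spoiler's
trace `ρ` on word `w`. -/
def play {σ Q : Type} (q : Q) (f : ℕ → (ℕ → σ) → (ℕ → Q) → Q)
    (w : ℕ → σ) (ρ : ℕ → Q) : ℕ → Q
  | 0 => q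
  | i + 1 => f i w ρ

/-- Delayed simulation `p ⊑^de q`: Duplicator has a (causal, step-wise) winning strategy
in the delayed simulation game from `(p,q)`. -/
def deSim {σ Q : Type} (A : BA σ Q) (p q : Q) : Prop :=
  ∃ f, Causal1 f ∧ ∀ (w : ℕ → σ) (ρ : ℕ → Q),
    A.InfTrace w ρ → ρ 0 = p →
    A.InfTrace w (play q f w ρ) ∧ A.Cde ρ (play q f w ρ)

/-- Pruning w.r.t. `P(id, ≺^de)`: remove every transition `(p,a,r)` such that some
transition `(p,a,r')` exists with `r` strictly delayed-simulated by `r'`. -/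
def pruneDe {σ Q : Type} (A : BA σ Q) : BA σ Q where
  I := A.I
  F := A.F
  δ := fun p a r => A.δ p a r ∧
    ¬ ∃ r', A.δ p a r' ∧ deSim A r r' ∧ ¬ deSim A r' r

namespace BA

variable {σ Q : Type}

def IsTrap (A : BA σ Q) (S : Set Q) : Prop :=
  ∀ x ∈ S, ∀ a y, A.δ x a y → y ∈ S

theorem InfTrace.mem_of_isTrap {A : BA σ Q} {S : Set Q} {w : ℕ → σ} {ρ : ℕ → Q}
    (hρ : A.InfTrace w ρ) (hS : A.IsTrap S) (h0 : ρ 0 ∈ S) : ∀ i, ρ i ∈ S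
  | 0 => h0
  | i + 1 => hS _ (hρ.mem_of_isTrap hS h0 i) _ _ (hρ i)

theorem lang_eq_empty_of_isTrap {A : BA σ Q} {S : Set Q} (hS : A.IsTrap S)
    (hI : A.I ⊆ S) (hF : Disjoint S A.F) : A.Lang = ∅ := by
  refine Set.eq_empty_of_forall_notMem fun w ⟨ρ, hρ, h0, hfair⟩ => ?_
  obtain ⟨m, -, hm⟩ := hfair 0
  exact hF.notMem_of_mem_left (hρ.mem_of_isTrap hS (hI h0) m) hm

end BA

section DelayedSimulation

variable {σ Q : Type}

/-- Duplicator's strategy: move to `r` and stay there. -/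
theorem deSim_of_isTrap {A : BA σ Q} {S : Set Q} {p s r : Q} (hS : A.IsTrap S) (hp : p ∈ S)
    (hr : r ∈ A.F) (hstep : ∀ x ∈ S, ∀ a y, A.δ x a y → A.δ s a r ∧ A.δ r a r) :
    deSim A p s := by
  refine ⟨fun _ _ _ => r, fun _ _ _ _ _ _ _ => rfl, fun w ρ hρ h0 => ⟨?_, ?_⟩⟩
  · have hmem := hρ.mem_of_isTrap hS (h0 ▸ hp)
    rintro (_ | i)
    · exact (hstep _ (hmem 0) _ _ (hρ 0)).1
    · exact (hstep _ (hmem (i + 1)) _ _ (hρ (i + 1))).2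
  · exact fun i _ => ⟨i + 1, i.le_succ, hr⟩

theorem not_deSim_of_stuck {A : BA σ Q} {p q : Q} {w : ℕ → σ} {ρ : ℕ → Q}
    (hρ : A.InfTrace w ρ) (h0 : ρ 0 = p) (hq : ∀ y, ¬ A.δ q (w 0) y) : ¬ deSim A p q := by
  rintro ⟨f, -, hf⟩
  exact hq _ ((hf w ρ hρ h0).1 0)

end DelayedSimulation

namespace PruneCounterexample

/-- State `0` is `p`, state `1` is `q`; letter `0` is `a`, letter `1` is `b`. -/
def A : BA (Fin 2) (Fin 2) where
  I := {0}
  F := {1}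
  δ := fun x a y => (x = 0 ∧ y = 0) ∨ (a = 0 ∧ y = 1)

theorem deSim_one_zero : deSim A 1 0 := by
  refine deSim_of_isTrap (S := {1}) (r := 1) ?_ rfl rfl ?_
  · rintro x rfl a y (⟨h, -⟩ | ⟨-, rfl⟩)
    · exact absurd h (by decide)
    · rfl
  · rintro x rfl a y (⟨h, -⟩ | ⟨ha, -⟩)
    · exact absurd h (by decide)
    · exact ⟨Or.inr ⟨ha, rfl⟩, Or.inr ⟨ha, rfl⟩⟩

theorem not_deSim_zero_one : ¬ deSim A 0 1 :=
  not_deSim_of_stuck (w := fun _ => 1) (ρ := fun _ => 0) (fun _ => Or.inl ⟨rfl, rfl⟩) rfl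
    (by simp [A])

theorem pruneDe_isTrap_zero : (pruneDe A).IsTrap {0} := by
  rintro x rfl a y ⟨⟨-, hy⟩ | ⟨-, rfl⟩, hpruned⟩
  · exact hy
  · exact (hpruned ⟨0, Or.inl ⟨rfl, rfl⟩, deSim_one_zero, not_deSim_zero_one⟩).elim

theorem mem_lang_const_zero : (fun _ => 0) ∈ A.Lang :=
  ⟨fun i => if i = 0 then 0 else 1, fun _ => Or.inr ⟨rfl, rfl⟩, rfl,
    fun n => ⟨n + 1, n.le_succ, by simp [A]⟩⟩

end PruneCounterexample

open PruneCounterexample in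
/-- `P(id, ≺^de)` is not good for pruning: there exists a 2-state Büchi automaton `A`
with `A = A/⊑^de` (delayed-simulation equivalence is trivial) whose language is
nonempty, but pruning the transitions dominated via strict delayed simulation makes the
language empty. -/
theorem prune_deSimStrict_not_GFP :
    ∃ A : BA (Fin 2) (Fin 2),
      (∀ x y, deSim A x y → deSim A y x → x = y) ∧
      A.Lang ≠ ∅ ∧ (pruneDe A).Lang = ∅ := by
  refine ⟨A, ?_, Set.nonempty_iff_ne_empty.mp ⟨_, mem_lang_const_zero⟩,
    BA.lang_eq_empty_of_isTrap pruneDe_isTrap_zero subset_rfl (by simp [pruneDe, A])⟩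
  intro x y hxy hyx
  fin_cases x <;> fin_cases y
  exacts [rfl, (not_deSim_zero_one hxy).elim, (not_deSim_zero_one hyx).elim, rfl]
end

section
/- Quotienting by mediated preorder has no effect on fully minimized automata: let A be a Büchi automaton such that (1) A = A/⊑^bw = A/⊑^di (no two distinct states are backward- or direct-simulation equivalent), and (2) for all states x,y, if x ⊑^di y and x ⊑^bw y then x = y. Let M be the mediated preorder, i.e., the largest relation M ⊆ ⊑^di ∘ (⊑^bw)⁻¹ with M ∘ ⊑^di ⊆ M. Then the equivalence induced by M is the identity, hence A = A/M. -/
/-! If `x M y` and `y M x`, take a mediator `w` of `y M x`, so `y ⊑^di w` and `x ⊑^bw w`.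
Closing `x M y` under `y ⊑^di w` gives `x M w`, whose mediator `z` has `x ⊑^di z` and
`x ⊑^bw w ⊑^bw z`; hence `z = x` by (2), then `w ⊑^bw x` and `w = x` by (1). So `y ⊑^di x`,
symmetrically `x ⊑^di y`, and (1) gives `x = y`. -/

namespace BA
variable {σ Q : Type}

lemma IsBwSim.comp {A : BA σ Q} {S T : Q → Q → Prop} (hS : A.IsBwSim S) (hT : A.IsBwSim T) :
    A.IsBwSim (Relation.Comp S T) := by
  rintro p r ⟨q, hpq, hqr⟩
  obtain ⟨hF₁, hI₁, hstep₁⟩ := hS p q hpq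
  obtain ⟨hF₂, hI₂, hstep₂⟩ := hT q r hqr
  refine ⟨hF₂ ∘ hF₁, hI₂ ∘ hI₁, fun a p' hp' => ?_⟩
  obtain ⟨q', hq', hpq'⟩ := hstep₁ a p' hp'
  obtain ⟨r', hr', hqr'⟩ := hstep₂ a q' hq'
  exact ⟨r', hr', q', hpq', hqr'⟩

lemma bwSim_trans {A : BA σ Q} {p q r : Q} (hpq : A.bwSim p q) (hqr : A.bwSim q r) :
    A.bwSim p r :=
  let ⟨S, hS, hSpq⟩ := hpq
  let ⟨T, hT, hTqr⟩ := hqr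
  ⟨Relation.Comp S T, hS.comp hT, q, hSpq, hTqr⟩

lemma eq_of_mediated_of_bwSim {A : BA σ Q} {M : Q → Q → Prop}
    (h1bw : ∀ x y, A.bwSim x y → A.bwSim y x → x = y)
    (h2 : ∀ x y, A.diSim x y → A.bwSim x y → x = y)
    (hMsub : ∀ x y, M x y → ∃ z, A.diSim x z ∧ A.bwSim y z)
    {x w : Q} (hM : M x w) (hbw : A.bwSim x w) : x = w := by
  obtain ⟨z, hxz, hwz⟩ := hMsub x w hM
  have hxz_eq : x = z := h2 x z hxz (bwSim_trans hbw hwz)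
  subst hxz_eq
  exact h1bw x w hbw hwz

lemma diSim_of_mediated_of_mediated {A : BA σ Q} {M : Q → Q → Prop}
    (h1bw : ∀ x y, A.bwSim x y → A.bwSim y x → x = y)
    (h2 : ∀ x y, A.diSim x y → A.bwSim x y → x = y)
    (hMsub : ∀ x y, M x y → ∃ z, A.diSim x z ∧ A.bwSim y z)
    (hMclosed : ∀ x y z, M x y → A.diSim y z → M x z)
    {x y : Q} (hxy : M x y) (hyx : M y x) : A.diSim y x := by
  obtain ⟨w, hyw, hxw⟩ := hMsub y x hyx
  have hxw_eq : x = w := eq_of_mediated_of_bwSim h1bw h2 hMsub (hMclosed x y w hxy hyw) hxw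
  exact hxw_eq ▸ hyw

end BA

theorem mediated_no_effect_general {σ Q : Type} (A : BA σ Q)
    (h1di : ∀ x y, A.diSim x y → A.diSim y x → x = y)
    (h1bw : ∀ x y, A.bwSim x y → A.bwSim y x → x = y)
    (h2 : ∀ x y, A.diSim x y → A.bwSim x y → x = y)
    (M : Q → Q → Prop)
    (hMsub : ∀ x y, M x y → ∃ z, A.diSim x z ∧ A.bwSim y z)
    (hMclosed : ∀ x y z, M x y → A.diSim y z → M x z) :
    ∀ x y, M x y → M y x → x = y := fun x y hxy hyx =>
  h1di x y (BA.diSim_of_mediated_of_mediated h1bw h2 hMsub hMclosed hyx hxy)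
    (BA.diSim_of_mediated_of_mediated h1bw h2 hMsub hMclosed hxy hyx)

/-- Quotienting by mediated preorder has no effect on fully minimized automata:
if (1) no two distinct states of `A` are backward- or direct-simulation equivalent, and
(2) `x ⊑^di y` and `x ⊑^bw y` imply `x = y`, then the equivalence induced by the
mediated preorder `M` (the largest `M ⊆ ⊑^di ∘ (⊑^bw)⁻¹` with `M ∘ ⊑^di ⊆ M`,
a preorder) is the identity. -/
theorem mediated_no_effect {σ Q : Type} (A : BA σ Q)
    (h1di : ∀ x y, A.diSim x y → A.diSim y x → x = y)
    (h1bw : ∀ x y, A.bwSim x y → A.bwSim y x → x = y)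
    (h2 : ∀ x y, A.diSim x y → A.bwSim x y → x = y)
    (M : Q → Q → Prop)
    (hMrefl : Reflexive M) (hMtrans : Transitive M)
    (hMsub : ∀ x y, M x y → ∃ z, A.diSim x z ∧ A.bwSim y z)
    (hMclosed : ∀ x y z, M x y → A.diSim y z → M x z)
    (hMmax : ∀ M' : Q → Q → Prop,
      (∀ x y, M' x y → ∃ z, A.diSim x z ∧ A.bwSim y z) →
      (∀ x y z, M' x y → A.diSim y z → M' x z) →
      ∀ x y, M' x y → M x y) :
    ∀ x y, M x y → M y x → x = y :=
  mediated_no_effect_general A h1di h1bw h2 M hMsub hMclosed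
end

section
/- Inclusion-preserving pruning of A w.r.t. B: let A, B be Büchi automata, let ⊑bw⁻ be the variant of backward trace inclusion between states of A and B that ignores accepting states (only requiring initial-state matching), and ⊑f fair trace inclusion between states of A and B. Pruning from A every transition (p,σ,r) for which B has a transition (p',σ,r') with p ⊑bw⁻ p' and r ⊑f r' is inclusion-preserving: L(A) ⊆ L(B) iff L(Prune(A,B)) ⊆ L(B). -/
/-- Backward trace inclusion between `A` and `B` ignoring accepting states (`⊑bw⁻`):
every initial finite trace of `A` ending in `p` is matched by an initial finite trace of
`B` on the same word ending in `q` (no condition on accepting states). -/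
def bwInclMinusAB {σ Q₁ Q₂ : Type} (A : BA σ Q₁) (B : BA σ Q₂) (p : Q₁) (q : Q₂) : Prop :=
  ∀ (w : ℕ → σ) (m : ℕ) (ρ : ℕ → Q₁),
    A.FinTrace w m ρ → ρ 0 ∈ A.I → ρ m = p →
    ∃ ρ', B.FinTrace w m ρ' ∧ ρ' 0 ∈ B.I ∧ ρ' m = q

/-- Fair trace inclusion between states of `A` and `B`. -/
def fInclAB {σ Q₁ Q₂ : Type} (A : BA σ Q₁) (B : BA σ Q₂) (p : Q₁) (q : Q₂) : Prop :=
  ∀ (w : ℕ → σ) (ρ : ℕ → Q₁), A.InfTrace w ρ → ρ 0 = p →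
    ∃ ρ', B.InfTrace w ρ' ∧ ρ' 0 = q ∧ (A.Fair ρ → B.Fair ρ')

/-- `Prune(A,B)`: remove from `A` every transition `(p,σ,r)` for which `B` has a
transition `(p',σ,r')` with `p ⊑bw⁻ p'` and `r ⊑f r'`. -/
def pruneAB {σ Q₁ Q₂ : Type} (A : BA σ Q₁) (B : BA σ Q₂) : BA σ Q₁ where
  I := A.I
  F := A.F
  δ := fun p a r => A.δ p a r ∧
    ¬ ∃ p' r', B.δ p' a r' ∧ bwInclMinusAB A B p p' ∧ fInclAB A B r r'

/-!
A word accepted by `A` is either accepted by `Prune(A,B)` along the same run, or that run uses a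
pruned transition `(ρ i, w i, ρ (i+1))`, dominated by a transition `(p', w i, r')` of `B`. In the
latter case `p ⊑bw⁻ p'` turns the run's prefix into an initial `B`-trace ending in `p'`, and
`r ⊑f r'` turns its (fair) suffix into a fair `B`-trace from `r'`; spliced together through
`(p', w i, r')` they form an accepting run of `B` on `w`.
-/

namespace BA

variable {σ Q : Type}

def splice (n : ℕ) (ρ₁ ρ₂ : ℕ → Q) : ℕ → Q :=
  fun k => if k ≤ n then ρ₁ k else ρ₂ (k - (n + 1))

theorem splice_of_le {n k : ℕ} (ρ₁ ρ₂ : ℕ → Q) (hk : k ≤ n) : splice n ρ₁ ρ₂ k = ρ₁ k :=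
  if_pos hk

theorem splice_add_succ (n k : ℕ) (ρ₁ ρ₂ : ℕ → Q) : splice n ρ₁ ρ₂ (n + 1 + k) = ρ₂ k := by
  simp only [splice, show ¬ n + 1 + k ≤ n by omega, if_false, Nat.add_sub_cancel_left]

theorem InfTrace.shift {A : BA σ Q} {w : ℕ → σ} {ρ : ℕ → Q} (h : A.InfTrace w ρ) (n : ℕ) :
    A.InfTrace (fun k => w (n + k)) (fun k => ρ (n + k)) :=
  fun k => by simpa only [Nat.add_assoc] using h (n + k)

theorem Fair.shift {A : BA σ Q} {ρ : ℕ → Q} (h : A.Fair ρ) (n : ℕ) :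
    A.Fair (fun k => ρ (n + k)) := by
  intro N
  obtain ⟨m, hm, hmF⟩ := h (n + N)
  exact ⟨m - n, by omega, show ρ (n + (m - n)) ∈ A.F by rwa [Nat.add_sub_cancel' (by omega)]⟩

theorem Fair.splice {A : BA σ Q} {ρ₂ : ℕ → Q} (h : A.Fair ρ₂) (n : ℕ) (ρ₁ : ℕ → Q) :
    A.Fair (splice n ρ₁ ρ₂) := by
  intro N
  obtain ⟨m, hm, hmF⟩ := h N
  exact ⟨n + 1 + m, by omega, by rwa [splice_add_succ]⟩

theorem InfTrace.splice {A : BA σ Q} {w : ℕ → σ} {n : ℕ} {ρ₁ ρ₂ : ℕ → Q}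
    (h₁ : A.FinTrace w n ρ₁) (hδ : A.δ (ρ₁ n) (w n) (ρ₂ 0))
    (h₂ : A.InfTrace (fun k => w (n + 1 + k)) ρ₂) :
    A.InfTrace w (splice n ρ₁ ρ₂) := by
  intro k
  rcases lt_trichotomy k n with hk | rfl | hk
  · rw [splice_of_le _ _ hk.le, splice_of_le _ _ hk]
    exact h₁ k hk
  · rwa [splice_of_le _ _ le_rfl, ← Nat.add_zero (k + 1), splice_add_succ]
  · obtain ⟨j, rfl⟩ := Nat.exists_eq_add_of_lt hk
    rw [show n + j + 1 = n + 1 + j by omega, splice_add_succ,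
      show n + 1 + j + 1 = n + 1 + (j + 1) by omega, splice_add_succ]
    exact h₂ j

end BA

open BA

variable {σ Q₁ Q₂ : Type}

theorem pruneAB_lang_subset (A : BA σ Q₁) (B : BA σ Q₂) : (pruneAB A B).Lang ⊆ A.Lang :=
  fun _ ⟨ρ, hρ, hI, hF⟩ => ⟨ρ, fun i => (hρ i).1, hI, hF⟩

theorem mem_lang_of_dominated_transition {A : BA σ Q₁} {B : BA σ Q₂} {w : ℕ → σ}
    {ρ : ℕ → Q₁} (hρ : A.InfTrace w ρ) (hI : ρ 0 ∈ A.I) (hF : A.Fair ρ) {i : ℕ} {p' r' : Q₂}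
    (hδ : B.δ p' (w i) r') (hbw : bwInclMinusAB A B (ρ i) p')
    (hf : fInclAB A B (ρ (i + 1)) r') :
    w ∈ B.Lang := by
  obtain ⟨ρ₁, hρ₁, hρ₁I, hρ₁i⟩ := hbw w i ρ (fun j _ => hρ j) hI rfl
  obtain ⟨ρ₂, hρ₂, hρ₂0, hρ₂F⟩ := hf _ _ (hρ.shift (i + 1)) (by simp)
  refine ⟨splice i ρ₁ ρ₂, InfTrace.splice hρ₁ (by rwa [hρ₁i, hρ₂0]) hρ₂, ?_,
    (hρ₂F (hF.shift _)).splice _ _⟩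
  rwa [splice_of_le _ _ (Nat.zero_le i)]

/-- Inclusion-preserving pruning of `A` w.r.t. `B`:
`L(A) ⊆ L(B)` iff `L(Prune(A,B)) ⊆ L(B)`. -/
theorem pruneAB_inclusion_preserving {σ Q₁ Q₂ : Type} (A : BA σ Q₁) (B : BA σ Q₂) :
    A.Lang ⊆ B.Lang ↔ (pruneAB A B).Lang ⊆ B.Lang := by
  refine ⟨(pruneAB_lang_subset A B).trans, ?_⟩
  rintro h w ⟨ρ, hρ, hI, hF⟩
  by_cases hkept : ∀ i, ¬ ∃ p' r', B.δ p' (w i) r' ∧ bwInclMinusAB A B (ρ i) p' ∧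
      fInclAB A B (ρ (i + 1)) r'
  · exact h ⟨ρ, fun i => ⟨hρ i, hkept i⟩, hI, hF⟩
  · push Not at hkept
    obtain ⟨i, p', r', hδ, hbw, hf⟩ := hkept
    exact mem_lang_of_dominated_transition hρ hI hF hδ hbw hf
end

section
/- The probability that a Tabakov-Vardi random automaton has no σ-deadlocked state is (α(n,T)/β(n,T))^{|Σ|}: with n states and T = n·td transitions per alphabet symbol placed uniformly at random without repetition among the n² possible (source,target) pairs, independently for each of the |Σ| symbols, the probability that every state has at least one outgoing transition for every symbol equals (α(n,T)/β(n,T))^{|Σ|}, where β(n,T) = C(n², T) and α(n,T) = Σ_{m=n}^{n²} C(m−n, T−n) · Σ_{i=0}^{n} (−1)^i C(n,i) C(m−i·n−1, n−1). -/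
/-!
A `T`-set `S ⊆ [n] × [n]` meets every row iff it has a row-maximum function `x : [n] → [n]`, and
then `S` consists of the graph of `x` and `T - n` of the `∑ᵣ xᵣ` cells strictly below that graph.
Hence there are `∑ₓ C(∑ᵣ xᵣ, T - n)` such sets. Grouping the `x` by `m = ∑ᵣ (xᵣ + 1)`, the `x`
with a given `m` are the compositions of `m - n` into `n` parts `< n`; inclusion–exclusion over
the parts that are `≥ n`, together with stars and bars, counts them as `innerCount n m`.
The `|Σ|` symbols are drawn independently, whence the `|Σ|`-th power.
-/

open Finset

/-- The inclusion-exclusion count of `n`-tuples `(x₁,…,xₙ) ∈ {1,…,n}ⁿ` with sum `m`: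
`∑ᵢ (−1)ⁱ C(n,i) C(m−i·n−1, n−1)` (a binomial with negative top argument is `0`). -/
def innerCount (n m : ℕ) : ℤ :=
  ∑ i ∈ Finset.range (n + 1),
    (-1 : ℤ) ^ i * (n.choose i : ℤ) *
      (if i * n + 1 ≤ m then (((m - i * n - 1).choose (n - 1) : ℕ) : ℤ) else 0)

/-- `α(n,T) = ∑_{m=n}^{n²} C(m−n, T−n) · ∑_{i=0}^{n} (−1)ⁱ C(n,i) C(m−i·n−1, n−1)`. -/
def alphaTV (n T : ℕ) : ℤ :=
  ∑ m ∈ Finset.Icc n (n ^ 2), (((m - n).choose (T - n) : ℕ) : ℤ) * innerCount n m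

section BoundedCompositions

variable {ι : Type*} [Fintype ι] [DecidableEq ι]

theorem card_piAntidiag_univ (N : ℕ) :
    #(piAntidiag (univ : Finset ι) N) = (Fintype.card ι + N - 1).choose N := by
  rw [← map_sym_eq_piAntidiag, card_map, sym_univ, card_univ, Sym.card_sym_eq_choose]

theorem card_filter_piAntidiag_univ_forall_le (t : Finset ι) (b N : ℕ) :
    #{f ∈ piAntidiag (univ : Finset ι) N | ∀ i ∈ t, b ≤ f i} =
      if #t * b ≤ N then #(piAntidiag (univ : Finset ι) (N - #t * b)) else 0 := by
  set g : ι → ℕ := fun i => if i ∈ t then b else 0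
  have sum_g : ∑ i, g i = #t * b := by
    simp only [g, sum_ite_mem, univ_inter, sum_const, smul_eq_mul]
  have g_le_iff (f : ι → ℕ) : g ≤ f ↔ ∀ i ∈ t, b ≤ f i := by
    refine ⟨fun h i hi => by simpa [g, hi] using h i, fun h i => ?_⟩
    by_cases hi : i ∈ t <;> simp [g, hi, h]
  split_ifs with hN
  · refine card_nbij' (· - g) (· + g) (fun f hf => ?_) (fun f hf => ?_)
      (fun f hf => ?_) (fun f _ => add_tsub_cancel_right f g)
    · simp only [coe_filter, mem_piAntidiag, mem_univ, implies_true, and_true, Set.mem_ofPred_eq,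
        SetLike.mem_coe, Pi.sub_apply] at hf ⊢
      rw [sum_tsub_distrib _ fun i _ => (g_le_iff f).2 hf.2 i, hf.1, sum_g]
    · simp only [coe_filter, mem_piAntidiag, mem_univ, implies_true, and_true, Set.mem_ofPred_eq,
        SetLike.mem_coe, Pi.add_apply] at hf ⊢
      rw [sum_add_distrib, hf, sum_g, Nat.sub_add_cancel hN]
      exact ⟨rfl, fun i hi => by simp [g, hi]⟩
    · simp only [coe_filter, mem_piAntidiag, mem_univ, implies_true, and_true,
        Set.mem_ofPred_eq] at hf
      exact tsub_add_cancel_of_le ((g_le_iff f).2 hf.2)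
  · rw [card_eq_zero, filter_eq_empty_iff]
    intro f hf hgf
    rw [mem_piAntidiag] at hf
    exact hN (sum_g ▸ hf.1 ▸ sum_le_sum fun i _ => (g_le_iff f).2 hgf i)

theorem card_filter_piAntidiag_univ_forall_lt_eq_sum_powerset (b N : ℕ) :
    (#{f ∈ piAntidiag (univ : Finset ι) N | ∀ i, f i < b} : ℤ) =
      ∑ t ∈ (univ : Finset ι).powerset,
        (-1 : ℤ) ^ #t * #{f ∈ piAntidiag (univ : Finset ι) N | ∀ i ∈ t, b ≤ f i} := by
  have alternating_sum (f : ι → ℕ) :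
      ∑ t ∈ (univ : Finset ι).powerset, (if ∀ i ∈ t, b ≤ f i then (-1 : ℤ) ^ #t else 0) =
        if ∀ i, f i < b then 1 else 0 := by
    have : {t ∈ (univ : Finset ι).powerset | ∀ i ∈ t, b ≤ f i} =
        ({i | b ≤ f i} : Finset ι).powerset := by
      ext t; simp [subset_iff]
    simp_rw [← sum_filter, this, sum_powerset_neg_one_pow_card, filter_eq_empty_iff]
    simp
  simp_rw [card_filter, Nat.cast_sum, Nat.cast_ite, Nat.cast_one, Nat.cast_zero, mul_sum, mul_ite,
    mul_one, mul_zero]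
  rw [sum_comm]
  exact sum_congr rfl fun f _ => (alternating_sum f).symm

theorem card_filter_piAntidiag_univ_forall_lt_eq_sum_range (b N : ℕ) :
    (#{f ∈ piAntidiag (univ : Finset ι) N | ∀ i, f i < b} : ℤ) =
      ∑ j ∈ range (Fintype.card ι + 1), (-1) ^ j * ((Fintype.card ι).choose j : ℤ) *
        ((if j * b ≤ N then (Fintype.card ι + (N - j * b) - 1).choose (N - j * b) else 0 : ℕ)
          : ℤ) := by
  simp_rw [card_filter_piAntidiag_univ_forall_lt_eq_sum_powerset,
    card_filter_piAntidiag_univ_forall_le, card_piAntidiag_univ]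
  rw [sum_powerset_apply_card (fun j => (-1 : ℤ) ^ j * ((if j * b ≤ N then
    (Fintype.card ι + (N - j * b) - 1).choose (N - j * b) else 0 : ℕ) : ℤ)), card_univ]
  exact sum_congr rfl fun j _ => by rw [nsmul_eq_mul]; ring

end BoundedCompositions

theorem innerCount_eq_card {n m : ℕ} (hn : 0 < n) (hm : n ≤ m) :
    innerCount n m = #{x : Fin n → Fin n | ∑ r, (x r : ℕ) + n = m} := by
  have card_eq : #{x : Fin n → Fin n | ∑ r, (x r : ℕ) + n = m} =
      #{f ∈ piAntidiag (univ : Finset (Fin n)) (m - n) | ∀ i, f i < n} := by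
    refine card_bij (fun x _ i => (x i : ℕ)) (fun x hx => ?_) (fun x _ y _ hxy => ?_)
      (fun f hf => ?_)
    · simp only [mem_filter, mem_univ, true_and, mem_piAntidiag] at hx ⊢
      exact ⟨⟨by omega, by simp⟩, fun i => (x i).isLt⟩
    · exact funext fun i => Fin.ext (congrFun hxy i)
    · simp only [mem_filter, mem_univ, true_and, mem_piAntidiag, implies_true, and_true] at hf ⊢
      obtain ⟨hsum, hlt⟩ := hf
      exact ⟨fun i => ⟨f i, hlt i⟩, by simp only; rw [hsum]; omega, rfl⟩
  have term_eq (j : ℕ) :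
      (if j * n ≤ m - n then (n + (m - n - j * n) - 1).choose (m - n - j * n) else 0) =
        if j * n + 1 ≤ m then (m - j * n - 1).choose (n - 1) else 0 := by
    by_cases hj : j * n ≤ m - n
    · rw [if_pos hj, if_pos (by omega), show n + (m - n - j * n) - 1 = m - j * n - 1 by omega]
      exact Nat.choose_symm_of_eq_add (by omega)
    · rw [if_neg hj]
      split_ifs
      · exact (Nat.choose_eq_zero_of_lt (by omega)).symm
      · rfl
  have count := card_filter_piAntidiag_univ_forall_lt_eq_sum_range (ι := Fin n) n (m - n)
  simp only [Fintype.card_fin, term_eq, Nat.cast_ite, Nat.cast_zero] at count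
  rw [card_eq, innerCount]
  -- `convert` reconciles the `Fin`-specific decidability instance of `∀ i, f i < n` in `card_eq`
  -- with the generic `Fintype` one in `count`.
  convert count.symm

def CoversRows {α β : Type*} (S : Finset (α × β)) : Prop :=
  ∀ r, ∃ c, (r, c) ∈ S

instance {α β : Type*} [Fintype α] [DecidableEq α] [Fintype β] [DecidableEq β]
    (S : Finset (α × β)) : Decidable (CoversRows S) :=
  inferInstanceAs (Decidable (∀ _, ∃ _, _))

section RowMaxima

variable {α β : Type*} [LinearOrder β]

def IsRowMax (S : Finset (α × β)) (x : α → β) : Prop :=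
  (∀ r, (r, x r) ∈ S) ∧ ∀ p ∈ S, p.2 ≤ x p.1

theorem IsRowMax.unique {S : Finset (α × β)} {x y : α → β} (hx : IsRowMax S x)
    (hy : IsRowMax S y) : x = y :=
  funext fun r => le_antisymm (hy.2 _ (hx.1 r)) (hx.2 _ (hy.1 r))

theorem exists_isRowMax [DecidableEq α] [Fintype β] {S : Finset (α × β)}
    (hS : CoversRows S) : ∃ x, IsRowMax S x := by
  let row (r : α) : Finset β := {c | (r, c) ∈ S}
  have row_nonempty (r : α) : (row r).Nonempty := by
    obtain ⟨c, hc⟩ := hS r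
    exact ⟨c, mem_filter.2 ⟨mem_univ c, hc⟩⟩
  exact ⟨fun r => (row r).max' (row_nonempty r),
    fun r => (mem_filter.1 ((row r).max'_mem (row_nonempty r))).2,
    fun p hp => le_max' (row p.1) _ (mem_filter.2 ⟨mem_univ _, hp⟩)⟩

variable [Fintype α]

def strictlyBelow [Fintype β] (x : α → β) : Finset (α × β) :=
  {p | p.2 < x p.1}

theorem card_strictlyBelow [Fintype β] [LocallyFiniteOrderBot β] (x : α → β) :
    #(strictlyBelow x) = ∑ r, #(Iio (x r)) := by
  simp only [strictlyBelow, card_filter, Fintype.sum_prod_type, ← filter_gt_eq_Iio]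

variable [DecidableEq α]

instance (S : Finset (α × β)) (x : α → β) : Decidable (IsRowMax S x) :=
  inferInstanceAs (Decidable (_ ∧ _))

def graphFinset (x : α → β) : Finset (α × β) :=
  univ.image fun r => (r, x r)

theorem mem_graphFinset {x : α → β} {p : α × β} : p ∈ graphFinset x ↔ p.2 = x p.1 := by
  simp only [graphFinset, mem_image, mem_univ, true_and]
  exact ⟨by rintro ⟨r, rfl⟩; rfl, fun h => ⟨p.1, by rw [← h]⟩⟩

theorem card_graphFinset (x : α → β) : #(graphFinset x) = Fintype.card α :=
  card_image_of_injective _ fun _ _ h => congrArg Prod.fst h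

variable [Fintype β]

theorem disjoint_strictlyBelow_graphFinset (x : α → β) :
    Disjoint (strictlyBelow x) (graphFinset x) :=
  disjoint_left.2 fun _ hp hp' => (mem_filter.1 hp).2.ne (mem_graphFinset.1 hp')

theorem isRowMax_iff {S : Finset (α × β)} {x : α → β} :
    IsRowMax S x ↔ graphFinset x ⊆ S ∧ S ⊆ strictlyBelow x ∪ graphFinset x := by
  simp only [IsRowMax, subset_iff, mem_graphFinset, mem_union, strictlyBelow, mem_filter,
    mem_univ, true_and, ← le_iff_lt_or_eq]
  refine and_congr ⟨fun h p hp => ?_, fun h r => h rfl⟩ Iff.rfl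
  rw [show p = (p.1, x p.1) from Prod.ext rfl hp]
  exact h p.1

theorem card_filter_isRowMax (x : α → β) (k : ℕ) :
    #{S : Finset (α × β) | #S = k + Fintype.card α ∧ IsRowMax S x} =
      (#(strictlyBelow x)).choose k := by
  rw [← card_powersetCard]
  have hdisj := disjoint_strictlyBelow_graphFinset x
  refine card_nbij' (· \ graphFinset x) (· ∪ graphFinset x) (fun S hS => ?_) (fun E hE => ?_)
    (fun S hS => ?_) (fun E hE => ?_)
  · simp only [coe_filter, mem_univ, true_and, Set.mem_ofPred_eq, SetLike.mem_coe,
      mem_powersetCard, isRowMax_iff] at hS ⊢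
    obtain ⟨hcard, hsub, hsup⟩ := hS
    exact ⟨sdiff_le_iff'.2 hsup, by
      rw [card_sdiff_of_subset hsub, hcard, card_graphFinset, Nat.add_sub_cancel]⟩
  · simp only [coe_filter, mem_univ, true_and, Set.mem_ofPred_eq, SetLike.mem_coe,
      mem_powersetCard, isRowMax_iff] at hE ⊢
    obtain ⟨hsub, hcard⟩ := hE
    exact ⟨by rw [card_union_of_disjoint (hdisj.mono_left hsub), hcard, card_graphFinset],
      subset_union_right, union_subset_union_left hsub⟩
  · simp only [coe_filter, mem_univ, true_and, Set.mem_ofPred_eq, isRowMax_iff] at hS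
    exact sdiff_union_of_subset hS.2.1
  · exact union_sdiff_cancel_right (hdisj.mono_left (mem_powersetCard.1 hE).1)

theorem card_filter_coversRows {T : ℕ} (hT : Fintype.card α ≤ T) :
    #{S : Finset (α × β) | #S = T ∧ CoversRows S} =
      ∑ x : α → β, (#(strictlyBelow x)).choose (T - Fintype.card α) := by
  have fibres : ({S : Finset (α × β) | #S = T ∧ CoversRows S} : Finset _) =
      univ.biUnion fun x => {S | #S = T ∧ IsRowMax S x} := by
    ext S
    simp only [mem_filter, mem_univ, true_and, mem_biUnion]
    constructor
    · rintro ⟨hcard, hS⟩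
      obtain ⟨x, hx⟩ := exists_isRowMax hS
      exact ⟨x, hcard, hx⟩
    · rintro ⟨x, hcard, hx⟩
      exact ⟨hcard, fun r => ⟨x r, hx.1 r⟩⟩
  rw [fibres, card_biUnion fun x _ y _ hxy => disjoint_left.2 fun S hSx hSy =>
    hxy ((mem_filter.1 hSx).2.2.unique (mem_filter.1 hSy).2.2)]
  refine sum_congr rfl fun x _ => ?_
  rw [← card_filter_isRowMax x, Nat.sub_add_cancel hT]

end RowMaxima

theorem card_filter_coversRows_fin_eq_alphaTV {n T : ℕ} (hn : 0 < n) (hT : n ≤ T) :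
    (#{S : Finset (Fin n × Fin n) | #S = T ∧ CoversRows S} : ℤ) = alphaTV n T := by
  have sum_mem_Icc (x : Fin n → Fin n) : ∑ r, (x r : ℕ) + n ∈ Icc n (n ^ 2) := by
    have : ∑ r, (x r : ℕ) + n ≤ n ^ 2 := by
      calc ∑ r, (x r : ℕ) + n = ∑ r, ((x r : ℕ) + 1) := by simp [sum_add_distrib]
        _ ≤ ∑ _r : Fin n, n := sum_le_sum fun r _ => (x r).isLt
        _ = n ^ 2 := by simp [sq]
    exact mem_Icc.2 ⟨by omega, this⟩
  rw [card_filter_coversRows (by simpa using hT)]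
  simp only [card_strictlyBelow, Fin.card_Iio, Fintype.card_fin]
  rw [← sum_fiberwise_of_maps_to (fun x _ => sum_mem_Icc x), alphaTV]
  push_cast
  refine sum_congr rfl fun m hm => ?_
  rw [innerCount_eq_card hn (mem_Icc.1 hm).1, sum_congr rfl fun x hx => by
    rw [show ∑ r, (x r : ℕ) = m - n by have := (mem_filter.1 hx).2; omega], sum_const,
    nsmul_eq_mul, mul_comm]

theorem card_subtype_forall_pi {ι γ : Type*} [Fintype ι] (p : γ → Prop) :
    Nat.card {f : ι → γ // ∀ k, p (f k)} = Nat.card {c // p c} ^ Fintype.card ι := by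
  rw [Nat.card_congr Equiv.subtypePiEquivPi, Nat.card_pi, prod_const, card_univ]

open Classical in
theorem tabakov_vardi_no_deadlock_probability_general (n T s : ℕ)
    (hn : 0 < n) (h1 : n ≤ T) :
    ((Fintype.card {f : Fin s → {S : Finset (Fin n × Fin n) // S.card = T} //
        ∀ (k : Fin s) (r : Fin n), ∃ c : Fin n, (r, c) ∈ ((f k : {S : Finset (Fin n × Fin n) // S.card = T}) : Finset (Fin n × Fin n))} : ℚ) /
      (Fintype.card (Fin s → {S : Finset (Fin n × Fin n) // S.card = T}) : ℚ))
    = (((alphaTV n T : ℤ) : ℚ) / (((n ^ 2).choose T : ℕ) : ℚ)) ^ s := by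
  have card_covering : Nat.card {S : {S : Finset (Fin n × Fin n) // #S = T} // CoversRows S.1} =
      #{S : Finset (Fin n × Fin n) | #S = T ∧ CoversRows S} := by
    rw [Nat.card_congr (Equiv.subtypeSubtypeEquivSubtypeInter _ _), Nat.card_eq_fintype_card,
      Fintype.card_subtype]
  have card_good : Nat.card {f : Fin s → {S : Finset (Fin n × Fin n) // #S = T} //
      ∀ k r, ∃ c, (r, c) ∈ (f k : Finset (Fin n × Fin n))} =
      #{S : Finset (Fin n × Fin n) | #S = T ∧ CoversRows S} ^ s :=
    (card_subtype_forall_pi fun S : {S : Finset (Fin n × Fin n) // #S = T} => CoversRows S.1).trans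
      (by rw [card_covering, Fintype.card_fin])
  have card_all : Fintype.card {S : Finset (Fin n × Fin n) // #S = T} = (n ^ 2).choose T := by
    rw [Fintype.card_finset_len, Fintype.card_prod, Fintype.card_fin, sq]
  rw [← Nat.card_eq_fintype_card, card_good, Fintype.card_fun, card_all, Fintype.card_fin,
    ← card_filter_coversRows_fin_eq_alphaTV hn h1, Int.cast_natCast, div_pow, Nat.cast_pow,
    Nat.cast_pow]

open Classical in
/-- Tabakov-Vardi random automata: for each of `s = |Σ|` alphabet symbols independently,
a uniformly random `T`-element set of transitions (`T = n·td`) is chosen among the `n²`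
possible ones. The probability that every state has at least one outgoing transition
for every symbol (i.e. no σ-deadlocked state) equals `(α(n,T)/β(n,T))^s`, where
`β(n,T) = C(n²,T)`. -/
theorem tabakov_vardi_no_deadlock_probability (n T s : ℕ)
    (hn : 0 < n) (h1 : n ≤ T) (h2 : T ≤ n ^ 2) :
    ((Fintype.card {f : Fin s → {S : Finset (Fin n × Fin n) // S.card = T} //
        ∀ (k : Fin s) (r : Fin n), ∃ c : Fin n, (r, c) ∈ ((f k : {S : Finset (Fin n × Fin n) // S.card = T}) : Finset (Fin n × Fin n))} : ℚ) /
      (Fintype.card (Fin s → {S : Finset (Fin n × Fin n) // S.card = T}) : ℚ))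
    = (((alphaTV n T : ℤ) : ℚ) / (((n ^ 2).choose T : ℕ) : ℚ)) ^ s :=
  tabakov_vardi_no_deadlock_probability_general n T s hn h1
end

section
/- Lookahead simulation is not transitive for lookahead k ≥ 2: there exists a Büchi automaton (over alphabet {a,b}) with states p₀, q₀, r₀ such that p₀ is 2-lookahead simulated by q₀ and q₀ is 2-lookahead simulated by r₀, but p₀ is not k-lookahead simulated by r₀ for any finite k > 0. -/
namespace BA
variable {σ Q : Type}

/-- `X` is a `k`-lookahead simulation (without acceptance condition): from any pair in
`X`, for every sequence of `k` consecutive Spoiler transitions, Duplicator can answer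
with some `1 ≤ m ≤ k` matching transitions so that the pair of reached states is again
in `X`. -/
def IsLkSim (A : BA σ Q) (k : ℕ) (X : Q → Q → Prop) : Prop :=
  ∀ p q, X p q →
    ∀ (w : ℕ → σ) (ρ : ℕ → Q), ρ 0 = p → (∀ i < k, A.δ (ρ i) (w i) (ρ (i + 1))) →
      ∃ m, 1 ≤ m ∧ m ≤ k ∧
        ∃ τ : ℕ → Q, τ 0 = q ∧ (∀ i < m, A.δ (τ i) (w i) (τ (i + 1))) ∧ X (ρ m) (τ m)

/-- `k`-lookahead simulation (the winning region of Duplicator in this safety game,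
i.e. the largest `k`-lookahead simulation). -/
def lkSim (A : BA σ Q) (k : ℕ) (p q : Q) : Prop :=
  ∃ X, IsLkSim A k X ∧ X p q

end BA

/-!
From `r₀` every run is in `{r₁, r₂}` after its first step, and `r₁` reads only `a`, `r₂` only
`b`. So whatever state Duplicator reaches from `r₀` in its answer, Spoiler, idling in the
universal state `p₀`, next plays the letter that state cannot read. The positive games need two
letters of lookahead: `q₀` returns to itself after any two letters by choosing `q₁` or `q₂`
according to the second one, and `rᵢ` follows `qᵢ → q₀ → qⱼ` to `rⱼ` in the same way.
-/

namespace BA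

variable {σ Q : Type} {A : BA σ Q} {k : ℕ} {X : Q → Q → Prop}

theorem isLkSim_two_of_forall
    (h : ∀ p q, X p q → ∀ x y p₁ p₂, A.δ p x p₁ → A.δ p₁ y p₂ →
      (∃ q₁, A.δ q x q₁ ∧ X p₁ q₁) ∨ (∃ q₁ q₂, A.δ q x q₁ ∧ A.δ q₁ y q₂ ∧ X p₂ q₂)) :
    A.IsLkSim 2 X := by
  intro p q hpq w ρ hρ0 hρ
  rcases h p q hpq (w 0) (w 1) (ρ 1) (ρ 2) (hρ0 ▸ hρ 0 (by omega)) (hρ 1 (by omega)) with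
    ⟨q₁, hq₁, hX⟩ | ⟨q₁, q₂, hq₁, hq₂, hX⟩
  · refine ⟨1, le_rfl, one_le_two, fun i => if i = 0 then q else q₁, rfl, ?_, hX⟩
    intro i hi
    obtain rfl : i = 0 := by omega
    exact hq₁
  · refine ⟨2, one_le_two, le_rfl, fun | 0 => q | 1 => q₁ | _ => q₂, rfl, ?_, hX⟩
    intro i hi
    interval_cases i
    exacts [hq₁, hq₂]

theorem IsLkSim.exists_path_of_loop (hX : A.IsLkSim k X) {p q : Q} {x : σ}
    (hp : A.δ p x p) (hpq : X p q) :
    ∃ m, 0 < m ∧ ∃ τ : ℕ → Q, τ 0 = q ∧ (∀ i < m, A.δ (τ i) x (τ (i + 1))) ∧ X p (τ m) :=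
  let ⟨m, hm, _, τ, hτ0, hτ, hX⟩ := hX p q hpq (fun _ => x) (fun _ => p) rfl (fun _ _ => hp)
  ⟨m, hm, τ, hτ0, hτ, hX⟩

theorem IsLkSim.exists_δ_of_loop (hX : A.IsLkSim k X) {p q : Q} {x : σ}
    (hp : A.δ p x p) (hpq : X p q) : ∃ q', A.δ q x q' :=
  let ⟨_, hm, τ, hτ0, hτ, _⟩ := hX.exists_path_of_loop hp hpq
  ⟨τ 1, hτ0 ▸ hτ 0 hm⟩

theorem mem_of_path {S : Set Q} {q : Q} (hq : ∀ x t, A.δ q x t → t ∈ S)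
    (hS : ∀ s ∈ S, ∀ x t, A.δ s x t → t ∈ S) {w : ℕ → σ} {τ : ℕ → Q} (hτ0 : τ 0 = q) :
    ∀ {m}, (∀ i < m, A.δ (τ i) (w i) (τ (i + 1))) → 0 < m → τ m ∈ S
  | 1, hτ, _ => hq _ _ (hτ0 ▸ hτ 0 one_pos)
  | m + 2, hτ, _ =>
    hS _ (mem_of_path hq hS hτ0 (fun i hi => hτ i (by omega)) (by omega)) _ _
      (hτ (m + 1) (by omega))

theorem not_lkSim_of_forall_stuck [Nonempty σ] {p q : Q} (hp : ∀ x, A.δ p x p)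
    {S : Set Q} (hq : ∀ x t, A.δ q x t → t ∈ S) (hS : ∀ s ∈ S, ∀ x t, A.δ s x t → t ∈ S)
    (hstuck : ∀ s ∈ S, ∃ x, ∀ t, ¬ A.δ s x t) : ¬ A.lkSim k p q := by
  rintro ⟨X, hX, hpq⟩
  obtain ⟨m, hm, τ, hτ0, hτ, hXm⟩ := hX.exists_path_of_loop (hp (Classical.arbitrary σ)) hpq
  obtain ⟨x, hx⟩ := hstuck (τ m) (mem_of_path hq hS hτ0 hτ hm)
  obtain ⟨t, ht⟩ := hX.exists_δ_of_loop (hp x) hXm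
  exact hx t ht

end BA

/-- States `p₀ = 0`, `q₀ q₁ q₂ = 1 2 3`, `r₀ r₁ r₂ = 4 5 6`; letters `a = 0`, `b = 1`. -/
def lkSimExample : BA (Fin 2) (Fin 7) where
  I := Set.univ
  F := Set.univ
  δ s x t :=
    s = 0 ∧ t = 0 ∨
    s = 1 ∧ (t = 2 ∨ t = 3) ∨ s = 2 ∧ x = 0 ∧ t = 1 ∨ s = 3 ∧ x = 1 ∧ t = 1 ∨
    s = 4 ∧ (t = 5 ∨ t = 6) ∨ s = 5 ∧ x = 0 ∧ (t = 5 ∨ t = 6) ∨ s = 6 ∧ x = 1 ∧ (t = 5 ∨ t = 6)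

instance (s : Fin 7) (x : Fin 2) (t : Fin 7) : Decidable (lkSimExample.δ s x t) := by
  dsimp only [lkSimExample]; infer_instance

set_option synthInstance.maxSize 1024 in
/-- Lookahead simulation is not transitive for lookahead `k ≥ 2`: there exists a Büchi
automaton over a two-letter alphabet (with 7 states) containing states `p₀, q₀, r₀`
such that `p₀` is 2-lookahead simulated by `q₀`, and `q₀` is 2-lookahead simulated by
`r₀`, but `p₀` is not `k`-lookahead simulated by `r₀` for any finite `k > 0`. -/
theorem lkSim_not_transitive :
    ∃ (A : BA (Fin 2) (Fin 7)) (p₀ q₀ r₀ : Fin 7),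
      A.lkSim 2 p₀ q₀ ∧ A.lkSim 2 q₀ r₀ ∧ ∀ k, 0 < k → ¬ A.lkSim k p₀ r₀ := by
  refine ⟨lkSimExample, 0, 1, 4, ?_, ?_, fun k _ => ?_⟩
  · exact ⟨fun p q => p = 0 ∧ q = 1, BA.isLkSim_two_of_forall (by decide), rfl, rfl⟩
  · exact ⟨fun p q => p = 1 ∧ q = 4 ∨ p = 2 ∧ q = 5 ∨ p = 3 ∧ q = 6,
      BA.isLkSim_two_of_forall (by decide), Or.inl ⟨rfl, rfl⟩⟩
  · exact BA.not_lkSim_of_forall_stuck (S := {5, 6}) (by decide) (by decide) (by decide)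
      (by decide)
end
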